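/- arXiv:1204.5448 — 10 statements merged into one kernel-verified Lean document; each statement's English description precedes it below -/
import Mathlib

section
/- Let m and n be coprime positive integers and let Γ_{m,n} = {um + vn : u, v ∈ ℤ≥0} ⊆ ℤ. Then for every integer a, a ∈ Γ_{m,n} if and only if mn − m − n − a ∉ Γ_{m,n}. -/
/-!
Since `gcd(m, n) = 1`, every integer has a unique representation `a = u m + v n` with
`0 ≤ u < n`, and `a ∈ Γ_{m,n}` exactly when `0 ≤ v` there: moving `u` into `[0, n)` only
shifts multiples of `m n` from the `u m` part into the `v n` part. The involution
`a ↦ m n - m - n - a` sends this normal form `(u, v)` to `(n - 1 - u, -1 - v)`, and exactly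
one of `v` and `-1 - v` is nonnegative.
-/

/-- The numerical semigroup generated by `m` and `n`, viewed as a subset of `ℤ`. -/
def Gamma (m n : ℕ) : Set ℤ := {x : ℤ | ∃ u v : ℕ, x = u * m + v * n}

namespace Gamma

variable {m n : ℕ}

theorem mem_iff_exists_int {a : ℤ} :
    a ∈ Gamma m n ↔ ∃ u v : ℤ, 0 ≤ u ∧ 0 ≤ v ∧ a = u * m + v * n := by
  constructor
  · rintro ⟨u, v, rfl⟩
    exact ⟨u, v, by positivity, by positivity, rfl⟩
  · rintro ⟨u, v, hu, hv, rfl⟩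
    exact ⟨u.toNat, v.toNat, by rw [Int.toNat_of_nonneg hu, Int.toNat_of_nonneg hv]⟩

theorem exists_eq_mul_add_mul (hn : 0 < n) (hmn : m.Coprime n) (a : ℤ) :
    ∃ u v : ℤ, 0 ≤ u ∧ u < n ∧ a = u * m + v * n := by
  obtain ⟨x, y, hxy⟩ := Nat.isCoprime_iff_coprime.mpr hmn
  have hn' : (0 : ℤ) < n := by exact_mod_cast hn
  refine ⟨a * x % n, a * y + a * x / n * m, Int.emod_nonneg _ hn'.ne',
    Int.emod_lt_of_pos _ hn', ?_⟩
  linear_combination -a * hxy - m * Int.emod_add_mul_ediv (a * x) n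

theorem le_of_mul_add_mul_eq (hmn : m.Coprime n) {u v u' v' : ℤ} (hu : 0 ≤ u)
    (hun : u < n) (hu' : 0 ≤ u') (h : u * m + v * n = u' * m + v' * n) : v' ≤ v := by
  have hcop : IsCoprime (n : ℤ) m := Nat.isCoprime_iff_coprime.mpr hmn.symm
  obtain ⟨k, hk⟩ : (n : ℤ) ∣ u - u' :=
    hcop.dvd_of_dvd_mul_right ⟨v' - v, by linear_combination h⟩
  have hk0 : k ≤ 0 := by nlinarith
  have hn : (n : ℤ) ≠ 0 := by omega
  have hv : v' - v = k * m :=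
    mul_left_cancel₀ hn (by linear_combination -h + m * hk)
  nlinarith [Int.natCast_nonneg m]

theorem mem_iff_nonneg_of_eq (hmn : m.Coprime n) {a u v : ℤ} (hu : 0 ≤ u) (hun : u < n)
    (ha : a = u * m + v * n) : a ∈ Gamma m n ↔ 0 ≤ v := by
  rw [mem_iff_exists_int]
  constructor
  · rintro ⟨u', v', hu', hv', ha'⟩
    exact hv'.trans (le_of_mul_add_mul_eq hmn hu hun hu' (ha ▸ ha'))
  · exact fun hv ↦ ⟨u, v, hu, hv, ha⟩

end Gamma

theorem gamma_symmetry_general (m n : ℕ) (hn : 0 < n) (hmn : Nat.Coprime m n)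
    (a : ℤ) :
    a ∈ Gamma m n ↔ ((m : ℤ) * n - m - n - a) ∉ Gamma m n := by
  obtain ⟨u, v, hu, hun, ha⟩ := Gamma.exists_eq_mul_add_mul hn hmn a
  have hdual : (m : ℤ) * n - m - n - a = (n - 1 - u) * m + (-1 - v) * n := by
    rw [ha]; ring
  rw [Gamma.mem_iff_nonneg_of_eq hmn hu hun ha,
    Gamma.mem_iff_nonneg_of_eq hmn (by omega) (by omega) hdual]
  omega

/-- **Symmetry of the plane curve semigroup.** For coprime positive `m, n` and any
integer `a`, `a ∈ Γ_{m,n}` iff `mn - m - n - a ∉ Γ_{m,n}`. -/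
theorem gamma_symmetry (m n : ℕ) (hm : 0 < m) (hn : 0 < n) (hmn : Nat.Coprime m n)
    (a : ℤ) :
    a ∈ Gamma m n ↔ ((m : ℤ) * n - m - n - a) ∉ Gamma m n :=
  gamma_symmetry_general m n hn hmn a
end

section
/- Let Δ be a 0-normalized Γ_{m,n}-semimodule. Then {φ ∈ ℤ : φ + d ∈ Γ_{m,n} for every d ∈ Δ} = {(mn − m − n) − y : y ∈ ℤ, y ∉ Δ}. -/
/-- A 0-normalized `Γ_{m,n}`-semimodule: a subset of `ℤ≥0` containing `0` and
closed under adding `m` and `n`. -/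
def IsSemimodule (m n : ℕ) (Δ : Set ℤ) : Prop :=
  (∀ x ∈ Δ, 0 ≤ x) ∧ (0 : ℤ) ∈ Δ ∧ (∀ x ∈ Δ, x + m ∈ Δ) ∧ (∀ x ∈ Δ, x + n ∈ Δ)

/-!
Every integer has a unique expression `a * m + b * n` with `0 ≤ a < n`, and it lies in `Γ_{m,n}`
exactly when `b ≥ 0`. Since `F - (a * m + b * n) = (n - 1 - a) * m + (-1 - b) * n` for
`F = mn - m - n`, this gives the symmetry `x ∈ Γ ↔ F - x ∉ Γ`. If `φ + Δ ⊆ Γ` then `F - φ ∉ Δ`,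
as `F ∉ Γ`; conversely, if `y ∉ Δ` and `d ∈ Δ`, then `y - d ∉ Γ` because `Δ + Γ ⊆ Δ`,
so `(F - y) + d ∈ Γ` by the symmetry.
-/

section Gamma

variable {m n : ℕ}

theorem exists_eq_mul_add_mul (hn : 0 < n) (hmn : Nat.Coprime m n) (x : ℤ) :
    ∃ a b : ℤ, 0 ≤ a ∧ a < n ∧ x = a * m + b * n := by
  obtain ⟨s, t, hst⟩ := Nat.isCoprime_iff_coprime.mpr hmn
  have hq := Int.mul_ediv_add_emod (x * s) n
  refine ⟨x * s % n, x * s / n * m + x * t, Int.emod_nonneg _ (by omega),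
    Int.emod_lt_of_pos _ (by omega), ?_⟩
  linear_combination (-(m : ℤ)) * hq - x * hst

theorem mul_add_mul_mem_gamma_iff (hn : 0 < n) (hmn : Nat.Coprime m n) {a b : ℤ}
    (ha₀ : 0 ≤ a) (ha : a < n) : a * m + b * n ∈ Gamma m n ↔ 0 ≤ b := by
  constructor
  · rintro ⟨u, v, huv⟩
    have hdvd : (n : ℤ) ∣ (u - a) * m := ⟨b - v, by linear_combination -huv⟩
    obtain ⟨k, hk⟩ := (Nat.isCoprime_iff_coprime.mpr hmn.symm).dvd_of_dvd_mul_right hdvd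
    have hk₀ : 0 ≤ k := by
      by_contra! hk₀
      nlinarith [Int.natCast_nonneg u]
    have hb : b = v + k * m := by
      refine mul_right_cancel₀ (b := (n : ℤ)) (by omega) ?_
      linear_combination huv + (m : ℤ) * hk
    rw [hb]
    positivity
  · intro hb
    exact ⟨a.toNat, b.toNat, by rw [Int.toNat_of_nonneg ha₀, Int.toNat_of_nonneg hb]⟩

theorem mem_gamma_iff_sub_not_mem_gamma (hn : 0 < n) (hmn : Nat.Coprime m n) (x : ℤ) :
    x ∈ Gamma m n ↔ (m : ℤ) * n - m - n - x ∉ Gamma m n := by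
  obtain ⟨a, b, ha₀, ha, rfl⟩ := exists_eq_mul_add_mul hn hmn x
  rw [show (m : ℤ) * n - m - n - (a * m + b * n) = (n - 1 - a) * m + (-1 - b) * n by ring,
    mul_add_mul_mem_gamma_iff hn hmn ha₀ ha,
    mul_add_mul_mem_gamma_iff hn hmn (by omega) (by omega)]
  omega

theorem frobenius_not_mem_gamma (hn : 0 < n) (hmn : Nat.Coprime m n) :
    (m : ℤ) * n - m - n ∉ Gamma m n := by
  simpa using (mem_gamma_iff_sub_not_mem_gamma hn hmn 0).mp ⟨0, 0, by simp⟩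

end Gamma

theorem add_natCast_mul_mem {Δ : Set ℤ} {c : ℤ} (hΔ : ∀ x ∈ Δ, x + c ∈ Δ) {d : ℤ} (hd : d ∈ Δ) :
    ∀ k : ℕ, d + k * c ∈ Δ
  | 0 => by simpa using hd
  | k + 1 => by
    simpa [add_mul, ← add_assoc] using hΔ _ (add_natCast_mul_mem hΔ hd k)

theorem IsSemimodule.add_mem {m n : ℕ} {Δ : Set ℤ} (hΔ : IsSemimodule m n Δ) {d g : ℤ}
    (hd : d ∈ Δ) (hg : g ∈ Gamma m n) : d + g ∈ Δ := by
  obtain ⟨u, v, rfl⟩ := hg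
  rw [← add_assoc]
  exact add_natCast_mul_mem hΔ.2.2.2 (add_natCast_mul_mem hΔ.2.2.1 hd u) v

theorem dual_semimodule_eq_general (m n : ℕ) (hn : 0 < n) (hmn : Nat.Coprime m n)
    (Δ : Set ℤ) (hΔ : IsSemimodule m n Δ) :
    {φ : ℤ | ∀ d ∈ Δ, φ + d ∈ Gamma m n} =
      {z : ℤ | ∃ y : ℤ, y ∉ Δ ∧ z = ((m : ℤ) * n - m - n) - y} := by
  ext φ
  constructor
  · intro h
    refine ⟨(m : ℤ) * n - m - n - φ, fun hy => frobenius_not_mem_gamma hn hmn ?_, by ring⟩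
    simpa using h _ hy
  · rintro ⟨y, hy, rfl⟩ d hd
    rw [mem_gamma_iff_sub_not_mem_gamma hn hmn]
    refine fun hyd => hy ?_
    convert hΔ.add_mem hd hyd using 1
    ring

/-- **Characterization of the dual semimodule.** For a 0-normalized `Γ_{m,n}`-semimodule
`Δ`, `{φ : φ + Δ ⊆ Γ} = (mn - m - n) - (ℤ ∖ Δ)`. -/
theorem dual_semimodule_eq (m n : ℕ) (hm : 0 < m) (hn : 0 < n) (hmn : Nat.Coprime m n)
    (Δ : Set ℤ) (hΔ : IsSemimodule m n Δ) :
    {φ : ℤ | ∀ d ∈ Δ, φ + d ∈ Gamma m n} =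
      {z : ℤ | ∃ y : ℤ, y ∉ Δ ∧ z = ((m : ℤ) * n - m - n) - y} :=
  dual_semimodule_eq_general m n hn hmn Δ hΔ
end

section
/- Let Δ be a 0-normalized Γ_{m,n}-semimodule, M(Δ) = max(ℤ∖Δ), and Δ̂ = {M(Δ) − y : y ∈ ℤ, y ∉ Δ}. Then Δ̂ is again a 0-normalized Γ_{m,n}-semimodule (i.e. Δ̂ ⊆ ℤ≥0, 0 ∈ Δ̂, Δ̂ + m ⊆ Δ̂, Δ̂ + n ⊆ Δ̂), and the operation is an involution: (Δ̂)̂ = Δ. -/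
/-- The dual (hatted) semimodule `Δ̂ = M - (ℤ ∖ Δ)`, where `M = max(ℤ ∖ Δ)`. -/
def hatSet (Δ : Set ℤ) (M : ℤ) : Set ℤ := {z : ℤ | ∃ y : ℤ, y ∉ Δ ∧ z = M - y}

/-! Membership `z ∈ Δ̂` means `M - z ∉ Δ`, so the complement of `Δ̂` is the reflection `M - Δ`.
Reflecting twice is the identity, and since `min Δ = 0` the reflection `M - Δ` has maximum `M`;
hence `M(Δ̂) = M(Δ)` and `Δ̂̂ = Δ`. Closure of `Δ̂` under `+ k` is closure of `ℤ ∖ Δ` under `- k`,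
which is the contrapositive of closure of `Δ` under `+ k`. -/

section HatSet

variable {Δ : Set ℤ} {M : ℤ}

theorem mem_hatSet_iff {z : ℤ} : z ∈ hatSet Δ M ↔ M - z ∉ Δ :=
  ⟨by rintro ⟨y, hy, rfl⟩; simpa using hy, fun h => ⟨M - z, h, by ring⟩⟩

theorem hatSet_hatSet : hatSet (hatSet Δ M) M = Δ := by
  ext x
  simp only [mem_hatSet_iff, sub_sub_cancel, not_not]

theorem hatSet_nonneg (hM : M ∈ upperBounds Δᶜ) {z : ℤ} (hz : z ∈ hatSet Δ M) : 0 ≤ z := by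
  have := hM (mem_hatSet_iff.mp hz)
  linarith

theorem zero_mem_hatSet (hM : M ∉ Δ) : (0 : ℤ) ∈ hatSet Δ M :=
  mem_hatSet_iff.mpr (by simpa using hM)

theorem add_mem_hatSet {k : ℤ} (hk : ∀ x ∈ Δ, x + k ∈ Δ) {z : ℤ} (hz : z ∈ hatSet Δ M) :
    z + k ∈ hatSet Δ M := by
  refine mem_hatSet_iff.mpr fun h => mem_hatSet_iff.mp hz ?_
  simpa [sub_add_eq_sub_sub, sub_add_cancel] using hk _ h

theorem isGreatest_compl_hatSet (hpos : ∀ x ∈ Δ, 0 ≤ x) (h0 : (0 : ℤ) ∈ Δ) :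
    IsGreatest (hatSet Δ M)ᶜ M := by
  refine ⟨fun h => mem_hatSet_iff.mp h (by simpa using h0), fun z hz => ?_⟩
  have := hpos _ (not_not.mp (mt mem_hatSet_iff.mpr hz))
  linarith

end HatSet

theorem hat_involution_general (m n : ℕ)
    (Δ : Set ℤ) (hΔ : IsSemimodule m n Δ) (M : ℤ) (hM : IsGreatest Δᶜ M) :
    IsSemimodule m n (hatSet Δ M) ∧
      ∀ M' : ℤ, IsGreatest (hatSet Δ M)ᶜ M' → hatSet (hatSet Δ M) M' = Δ := by
  obtain ⟨hpos, h0, haddm, haddn⟩ := hΔ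
  refine ⟨⟨fun _ => hatSet_nonneg hM.2, zero_mem_hatSet hM.1, fun _ => add_mem_hatSet haddm,
    fun _ => add_mem_hatSet haddn⟩, fun M' hM' => ?_⟩
  rw [hM'.unique (isGreatest_compl_hatSet hpos h0), hatSet_hatSet]

/-- **The hat operation is a well-defined involution.** If `Δ` is a 0-normalized
`Γ_{m,n}`-semimodule and `M = max(ℤ ∖ Δ)`, then `Δ̂ = M - (ℤ ∖ Δ)` is again a
0-normalized `Γ_{m,n}`-semimodule, and applying the operation twice returns `Δ`. -/
theorem hat_involution (m n : ℕ) (hm : 0 < m) (hn : 0 < n) (hmn : Nat.Coprime m n)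
    (Δ : Set ℤ) (hΔ : IsSemimodule m n Δ) (M : ℤ) (hM : IsGreatest Δᶜ M) :
    IsSemimodule m n (hatSet Δ M) ∧
      ∀ M' : ℤ, IsGreatest (hatSet Δ M)ᶜ M' → hatSet (hatSet Δ M) M' = Δ :=
  hat_involution_general m n Δ hΔ M hM
end

section
/- Let Δ be a 0-normalized Γ_{m,n}-semimodule and let a be an n-generator of Δ (a ∈ Δ and a − n ∉ Δ). Then #([a, a+m) ∖ Δ) equals the number of m-cogenerators of Δ that are greater than a, i.e. #{b ∈ ℤ : b ∉ Δ, b + m ∈ Δ, b > a}. -/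
theorem add_emod_sub_modEq (a b d : ℤ) : a + (b - a) % d ≡ b [ZMOD d] := by
  simpa using (Int.mod_modEq (b - a) d).add_left a

theorem add_emod_sub_le {a b d : ℤ} (hd : 0 < d) (hab : a ≤ b) : a + (b - a) % d ≤ b := by
  have hdiv := Int.emod_def (b - a) d
  have hq := Int.ediv_nonneg (sub_nonneg.2 hab) hd.le
  nlinarith

theorem add_emod_sub_eq_of_modEq {a b y d : ℤ} (hay : a ≤ y) (hyd : y < a + d)
    (h : b ≡ y [ZMOD d]) : a + (b - a) % d = y := by
  rw [Int.ModEq.eq (h.sub_right a), Int.emod_eq_of_lt (by linarith) (by linarith)]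
  ring

theorem exists_nat_mul_modEq {m n : ℕ} (hm : 0 < m) (hmn : m.Coprime n) (t : ℤ) :
    ∃ j : ℕ, j * n ≡ t [ZMOD m] := by
  have : NeZero m := ⟨hm.ne'⟩
  refine ⟨((t : ZMod m) * (n : ZMod m)⁻¹).val, (ZMod.intCast_eq_intCast_iff _ _ _).mp ?_⟩
  push_cast
  rw [ZMod.natCast_zmod_val, mul_assoc, mul_comm _ (n : ZMod m),
    ZMod.coe_mul_inv_eq_one n hmn.symm, mul_one]

section ClosedUnderAdd

variable {Δ : Set ℤ} {d : ℤ}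

theorem add_nat_mul_mem (hΔ : ∀ x ∈ Δ, x + d ∈ Δ) {x : ℤ} (hx : x ∈ Δ) (k : ℕ) :
    x + k * d ∈ Δ := by
  induction k with
  | zero => simpa using hx
  | succ k ih => simpa [add_mul, ← add_assoc] using hΔ _ ih

theorem mem_of_le_of_modEq (hΔ : ∀ x ∈ Δ, x + d ∈ Δ) (hd : 0 < d) {x z : ℤ} (hx : x ∈ Δ)
    (hxz : x ≤ z) (h : x ≡ z [ZMOD d]) : z ∈ Δ := by
  obtain ⟨c, hc⟩ := h.dvd
  lift c to ℕ using nonneg_of_mul_nonneg_right (by linarith) hd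
  convert add_nat_mul_mem hΔ hx c using 1
  linarith

theorem lt_of_mem_of_notMem_of_modEq (hΔ : ∀ x ∈ Δ, x + d ∈ Δ) (hd : 0 < d) {x y : ℤ}
    (hx : x ∈ Δ) (hy : y ∉ Δ) (h : x ≡ y [ZMOD d]) : y < x :=
  lt_of_not_ge fun hxy => hy (mem_of_le_of_modEq hΔ hd hx hxy h)

theorem eq_of_modEq_of_notMem_of_add_mem (hΔ : ∀ x ∈ Δ, x + d ∈ Δ) (hd : 0 < d) {b c : ℤ}
    (hb : b ∉ Δ) (hbd : b + d ∈ Δ) (hc : c ∉ Δ) (hcd : c + d ∈ Δ) (h : b ≡ c [ZMOD d]) :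
    b = c := by
  have hcb := lt_of_mem_of_notMem_of_modEq hΔ hd hbd hc (Int.add_modEq_right.trans h)
  have hbc := lt_of_mem_of_notMem_of_modEq hΔ hd hcd hb (Int.add_modEq_right.trans h.symm)
  have := Int.eq_zero_of_abs_lt_dvd h.dvd (abs_sub_lt_iff.2 ⟨by linarith, by linarith⟩)
  linarith

theorem exists_notMem_add_mem_of_add_nat_mul_mem (hd : 0 ≤ d) :
    ∀ (N : ℕ) {x : ℤ}, x ∉ Δ → x + N * d ∈ Δ →
      ∃ b, b ∉ Δ ∧ b + d ∈ Δ ∧ x ≤ b ∧ x ≡ b [ZMOD d]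
  | 0, x, hx, hN => by simp_all
  | N + 1, x, hx, hN => by
    by_cases hxd : x + d ∈ Δ
    · exact ⟨x, hx, hxd, le_rfl, rfl⟩
    · obtain ⟨b, hb, hbd, hxb, hmod⟩ :=
        exists_notMem_add_mem_of_add_nat_mul_mem hd N hxd (by convert hN using 1; push_cast; ring)
      exact ⟨b, hb, hbd, by linarith, Int.add_modEq_right.symm.trans hmod⟩

theorem exists_notMem_add_mem_modEq (hΔ : ∀ x ∈ Δ, x + d ∈ Δ) (hd : 0 < d) {y z : ℤ}
    (hy : y ∉ Δ) (hz : z ∈ Δ) (h : z ≡ y [ZMOD d]) :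
    ∃ b, b ∉ Δ ∧ b + d ∈ Δ ∧ y ≤ b ∧ y ≡ b [ZMOD d] := by
  obtain ⟨c, hc⟩ := h.dvd
  have hN := Int.self_le_toNat (-c)
  refine exists_notMem_add_mem_of_add_nat_mul_mem hd.le (-c).toNat hy
    (mem_of_le_of_modEq hΔ hd hz (by nlinarith) (Int.modEq_iff_dvd.2 ⟨c + (-c).toNat, ?_⟩))
  linear_combination hc

end ClosedUnderAdd

theorem gap_count_eq_cogenerators_gt_general (m n : ℕ) (hm : 0 < m)
    (hmn : Nat.Coprime m n) (Δ : Set ℤ) (hΔ : IsSemimodule m n Δ)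
    (a : ℤ) (ha : a ∈ Δ) :
    ({y : ℤ | a ≤ y ∧ y < a + m} \ Δ).ncard =
      {b : ℤ | b ∉ Δ ∧ b + m ∈ Δ ∧ a < b}.ncard := by
  obtain ⟨-, -, hΔm, hΔn⟩ := hΔ
  have hm' : (0 : ℤ) < m := by exact_mod_cast hm
  refine (Set.ncard_congr (fun b _ => a + (b - a) % m) ?_ ?_ ?_).symm
  · rintro b ⟨hb, -, hab⟩
    have hr₀ := Int.emod_nonneg (b - a) hm'.ne'
    have hr₁ := Int.emod_lt_of_pos (b - a) hm'
    refine ⟨⟨by linarith, by linarith⟩, fun hr => hb ?_⟩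
    exact mem_of_le_of_modEq hΔm hm' hr (add_emod_sub_le hm' hab.le) (add_emod_sub_modEq a b m)
  · rintro b c ⟨hb, hbm, -⟩ ⟨hc, hcm, -⟩ h
    exact eq_of_modEq_of_notMem_of_add_mem hΔm hm' hb hbm hc hcm
      (((add_emod_sub_modEq a b m).symm.trans (by rw [h])).trans (add_emod_sub_modEq a c m))
  · rintro y ⟨⟨hay, hya⟩, hy⟩
    obtain ⟨j, hj⟩ := exists_nat_mul_modEq hm hmn (y - a)
    obtain ⟨b, hb, hbm, hyb, hmod⟩ := exists_notMem_add_mem_modEq hΔm hm' hy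
      (add_nat_mul_mem hΔn ha j) (by simpa using hj.add_left a)
    refine ⟨b, ⟨hb, hbm, (hay.trans hyb).lt_of_ne (by rintro rfl; exact hb ha)⟩, ?_⟩
    exact add_emod_sub_eq_of_modEq hay hya hmod.symm

/-- For an `n`-generator `a` of a 0-normalized `Γ_{m,n}`-semimodule `Δ`, the number of
gaps of `Δ` in `[a, a+m)` equals the number of `m`-cogenerators of `Δ` greater than `a`. -/
theorem gap_count_eq_cogenerators_gt (m n : ℕ) (hm : 0 < m) (hn : 0 < n)
    (hmn : Nat.Coprime m n) (Δ : Set ℤ) (hΔ : IsSemimodule m n Δ)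
    (a : ℤ) (ha : a ∈ Δ) (ha' : a - n ∉ Δ) :
    ({y : ℤ | a ≤ y ∧ y < a + m} \ Δ).ncard =
      {b : ℤ | b ∉ Δ ∧ b + m ∈ Δ ∧ a < b}.ncard :=
  gap_count_eq_cogenerators_gt_general m n hm hmn Δ hΔ a ha
end

section
/- Let n be a positive integer, m = n + 1, and let Δ be a 0-normalized Γ_{n,n+1}-semimodule. Then the multiset { #([a, a+n) ∖ Δ) : a an (n+1)-generator of Δ } equals the multiset { #([b, b+n+1) ∖ Δ) : b an n-generator of Δ } together with one additional copy of 0. (Equivalently, the diagrams G_{n+1}(Δ) and G_n(Δ) coincide.) -/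
/-- The number of gaps of `Δ` in the interval `[x, x + d)`. -/
noncomputable def gapCount (d : ℕ) (Δ : Set ℤ) (x : ℤ) : ℕ :=
  ({y : ℤ | x ≤ y ∧ y < x + d} \ Δ).ncard

/-!
Call a maximal block of consecutive elements of `Δ` a run. Closure under `+n` and `+(n+1)` makes
the first element of every run an `(n+1)`-generator and the last element of every finite run an
`n`-generator, while inside a run `x + 1` is an `(n+1)`-generator exactly when `x` is an
`n`-generator. The gap count `#([x, x+n) ∖ Δ)` is constant along runs. Hence, counting from the
left, the `(n+1)`-generators below `N + 1` with gap count `v` outnumber the `n`-generators below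
`N` with gap count `v` by one exactly when `N ∈ Δ` has gap count `v`, and by none otherwise.
Beyond the conductor, `N` lies in the infinite run, whose gap count is `0`.
-/

open Set

/-- Its cardinality is the multiplicity of `v` in the paper's multiset `G_d(Δ)`, where `e` is the
other generator of `Γ_{d,e}`. -/
def generatorsWithGaps (d e : ℕ) (Δ : Set ℤ) (v : ℕ) : Set ℤ :=
  {a | a ∈ Δ ∧ a - d ∉ Δ ∧ gapCount e Δ a = v}

open Classical in
theorem ncard_inter_Iio_add_one {S : Set ℤ} (hS : BddBelow S) (N : ℤ) :
    (S ∩ Iio (N + 1)).ncard = (S ∩ Iio N).ncard + if N ∈ S then 1 else 0 := by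
  obtain ⟨b, hb⟩ := hS
  have hfin : (S ∩ Iio N).Finite := (finite_Ico b N).subset fun x hx => ⟨hb hx.1, hx.2⟩
  have hIio : Iio (N + 1) = insert N (Iio N) := by
    ext x
    simp only [mem_Iio, mem_insert_iff]
    omega
  rw [hIio]
  split_ifs with hN
  · rw [inter_insert_of_mem hN, ncard_insert_of_notMem (fun h => lt_irrefl N h.2) hfin]
  · rw [inter_insert_of_notMem hN, add_zero]

section gapCount

variable {Δ : Set ℤ} {d : ℕ} {x : ℤ}

theorem gapCount_add_one (hx : x ∈ Δ) (hxd : x + d ∈ Δ) :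
    gapCount d Δ (x + 1) = gapCount d Δ x := by
  unfold gapCount
  congr 1
  ext y
  refine and_congr_left fun hy => ?_
  have : y ≠ x := fun h => hy (h ▸ hx)
  have : y ≠ x + d := fun h => hy (h ▸ hxd)
  simp only [mem_ofPred_eq]
  omega

theorem gapCount_succ (hxd : x + d ∈ Δ) : gapCount (d + 1) Δ x = gapCount d Δ x := by
  unfold gapCount
  congr 1
  ext y
  refine and_congr_left fun hy => ?_
  have : y ≠ x + d := fun h => hy (h ▸ hxd)
  simp only [mem_ofPred_eq]
  omega

theorem gapCount_eq_zero_of_forall_mem (h : ∀ y, x ≤ y → y ∈ Δ) : gapCount d Δ x = 0 := by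
  rw [gapCount, sdiff_eq_empty.mpr fun y hy => h y hy.1, ncard_empty]

end gapCount

theorem add_mul_mem_of_add_mem {Δ : Set ℤ} {d : ℤ} (h : ∀ x ∈ Δ, x + d ∈ Δ) {x : ℤ}
    (hx : x ∈ Δ) (k : ℕ) : x + k * d ∈ Δ := by
  induction k with
  | zero => simpa
  | succ k ih => simpa [add_mul, add_assoc] using h _ ih

namespace IsSemimodule

variable {n : ℕ} {Δ : Set ℤ}

theorem mem_of_sq_le (hΔ : IsSemimodule (n + 1) n Δ) {k : ℤ} (hk : n * n ≤ k) : k ∈ Δ := by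
  obtain ⟨-, h0, hm, hn⟩ := hΔ
  lift k to ℕ using le_trans (by positivity) hk
  rcases Nat.eq_zero_or_pos n with rfl | hpos
  · simpa using add_mul_mem_of_add_mem hm h0 k
  -- `k = q n + r` with `r < n ≤ q`, so `k = r (n+1) + (q - r) n`.
  have hr : k % n ≤ k / n :=
    (Nat.mod_lt k hpos).le.trans ((Nat.le_div_iff_mul_le hpos).mpr (by exact_mod_cast hk))
  have hk' : k = k % n * (n + 1) + (k / n - k % n) * n := by
    obtain ⟨t, ht⟩ := Nat.exists_eq_add_of_le hr
    calc k = n * (k / n) + k % n := (Nat.div_add_mod k n).symm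
      _ = _ := by rw [ht, Nat.add_sub_cancel_left]; ring
  have := add_mul_mem_of_add_mem hn (add_mul_mem_of_add_mem hm h0 (k % n)) (k / n - k % n)
  rw [hk']
  simpa using this

theorem generatorsWithGaps_succ (hΔ : IsSemimodule (n + 1) n Δ) (v : ℕ) :
    generatorsWithGaps n (n + 1) Δ v = generatorsWithGaps n n Δ v := by
  ext b
  refine and_congr_right fun hb => and_congr_right fun _ => ?_
  rw [gapCount_succ (hΔ.2.2.2 b hb)]

theorem bddBelow_generatorsWithGaps (hΔ : IsSemimodule (n + 1) n Δ) (d e v : ℕ) :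
    BddBelow (generatorsWithGaps d e Δ v) :=
  ⟨0, fun a ha => hΔ.1 a ha.1⟩

open Classical in
theorem generator_balance (hΔ : IsSemimodule (n + 1) n Δ) (v : ℕ) (x : ℤ) :
    ((if x ∈ Δ ∧ gapCount n Δ x = v then 1 else 0) +
        if x + 1 ∈ generatorsWithGaps (n + 1) n Δ v then 1 else 0) =
      (if x ∈ generatorsWithGaps n n Δ v then 1 else 0) +
        if x + 1 ∈ Δ ∧ gapCount n Δ (x + 1) = v then 1 else 0 := by
  obtain ⟨-, -, hm, hn⟩ := hΔ
  have hshift : x + 1 - ((n + 1 : ℕ) : ℤ) = x - n := by push_cast; ring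
  simp only [generatorsWithGaps, mem_ofPred_eq, hshift]
  by_cases hx : x ∈ Δ <;> by_cases hx1 : x + 1 ∈ Δ
  · rw [gapCount_add_one hx (hn x hx)]
    simp [hx, hx1, add_comm]
  · have : x - n ∉ Δ := fun h => hx1 (by convert hm _ h using 1; push_cast; ring)
    simp [hx, hx1, this]
  · have : x - n ∉ Δ := fun h => hx (by simpa using hn _ h)
    simp [hx, hx1, this]
  · simp [hx, hx1]

open Classical in
theorem ncard_generatorsWithGaps_inter_Iio (hΔ : IsSemimodule (n + 1) n Δ) (v : ℕ) (N : ℤ)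
    (hN : -1 ≤ N) :
    (generatorsWithGaps (n + 1) n Δ v ∩ Iio (N + 1)).ncard =
      (generatorsWithGaps n n Δ v ∩ Iio N).ncard +
        if N ∈ Δ ∧ gapCount n Δ N = v then 1 else 0 := by
  induction N, hN using Int.leInduction with
  | base =>
    have hneg : ∀ x < 0, x ∉ Δ := fun x hx h => (hΔ.1 x h).not_gt hx
    have hempty : ∀ d e N, N ≤ 0 → generatorsWithGaps d e Δ v ∩ Iio N = ∅ := fun d e N hN =>
      eq_empty_of_forall_notMem fun x hx => hneg x ((mem_Iio.mp hx.2).trans_le hN) hx.1.1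
    rw [hempty _ _ _ (by norm_num), hempty _ _ _ (by norm_num),
      if_neg fun h => hneg _ (by norm_num) h.1, ncard_empty]
  | succ N _ ih =>
    rw [ncard_inter_Iio_add_one (bddBelow_generatorsWithGaps hΔ _ _ _), ih, add_assoc,
      generator_balance hΔ, ← add_assoc,
      ← ncard_inter_Iio_add_one (bddBelow_generatorsWithGaps hΔ _ _ _)]

end IsSemimodule

theorem G_np1_eq_G_n_general (n : ℕ) (Δ : Set ℤ)
    (hΔ : IsSemimodule (n + 1) n Δ) :
    ∀ v : ℕ,
      {a : ℤ | a ∈ Δ ∧ a - (n + 1) ∉ Δ ∧ gapCount n Δ a = v}.ncard =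
        {b : ℤ | b ∈ Δ ∧ b - n ∉ Δ ∧ gapCount (n + 1) Δ b = v}.ncard +
          (if v = 0 then 1 else 0) := by
  classical
  intro v
  set C : ℤ := n * n + n
  have hA : generatorsWithGaps (n + 1) n Δ v ⊆ Iio (C + 1) := fun a ha => by
    by_contra h
    simp only [mem_Iio, not_lt] at h
    exact ha.2.1 (hΔ.mem_of_sq_le (by push_cast; linarith))
  have hB : generatorsWithGaps n n Δ v ⊆ Iio C := fun b hb => by
    by_contra h
    simp only [mem_Iio, not_lt] at h
    exact hb.2.1 (hΔ.mem_of_sq_le (by linarith))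
  have hC : (C ∈ Δ ∧ gapCount n Δ C = v) ↔ v = 0 := by
    rw [gapCount_eq_zero_of_forall_mem fun y hy => hΔ.mem_of_sq_le (by linarith)]
    exact ⟨fun h => h.2.symm, fun h => ⟨hΔ.mem_of_sq_le (by linarith), h.symm⟩⟩
  have key := hΔ.ncard_generatorsWithGaps_inter_Iio v C
    (by linarith [show (0 : ℤ) ≤ n * n + n by positivity])
  rw [inter_eq_left.mpr hA, inter_eq_left.mpr hB, if_congr hC rfl rfl,
    ← hΔ.generatorsWithGaps_succ] at key
  exact key

/-- **`G_{n+1} = G_n` for `m = n + 1`.** For a 0-normalized `Γ_{n,n+1}`-semimodule `Δ`,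
the multiset of values `#([a, a+n) ∖ Δ)` over `(n+1)`-generators `a` of `Δ` equals the
multiset of values `#([b, b+n+1) ∖ Δ)` over `n`-generators `b` of `Δ`, together with one
extra copy of `0`. (Multiset equality is expressed by equality of multiplicities.) -/
theorem G_np1_eq_G_n (n : ℕ) (hn : 0 < n) (Δ : Set ℤ)
    (hΔ : IsSemimodule (n + 1) n Δ) :
    ∀ v : ℕ,
      {a : ℤ | a ∈ Δ ∧ a - (n + 1) ∉ Δ ∧ gapCount n Δ a = v}.ncard =
        {b : ℤ | b ∈ Δ ∧ b - n ∉ Δ ∧ gapCount (n + 1) Δ b = v}.ncard +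
          (if v = 0 then 1 else 0) :=
  G_np1_eq_G_n_general n Δ hΔ
end

section
/- Let m be a positive integer coprime to 3 and set δ = m − 1. Then the map φ : D ↦ (δ − |D|, h₊(D)), defined on the set of Young diagrams below the diagonal of the m×3 rectangle, is injective, and its image is exactly the set of integer points of the triangle T_δ = {(a, b) ∈ ℤ≥0 × ℤ≥0 : a + b ≤ δ, a + 2b ≥ δ, 2a + b ≥ δ}. -/
/-!
Below the diagonal of the `m × 3` rectangle a Young diagram has at most two rows, of lengths
`p ≥ q` with `3p < 2m` and `3q < m`. For such a diagram every cell of the second row counts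
towards `h₊`, and a cell of the first row counts exactly when its arm, measured against `m / 3`,
is long enough (if the cell has a cell above it) or short enough (if it has not). This gives
`h₊ = q + min (p - q) (m/3 + 1) + min q (p - m/3)`, and the claim becomes a piece of linear
arithmetic on the pairs `(p, q)`, in which `m ≢ 0 (mod 3)` is what makes every lattice point
of the triangle a value.
-/

/-- A Young diagram as a downward-closed finite set of cells `(x, y)` (column, row). -/
def IsYoung (D : Finset (ℕ × ℕ)) : Prop :=
  ∀ x y x' y', (x, y) ∈ D → x' ≤ x → y' ≤ y → (x', y') ∈ D

/-- `D` lies below the diagonal of the `m × n` rectangle. -/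
def BelowDiag (m n : ℕ) (D : Finset (ℕ × ℕ)) : Prop :=
  ∀ c ∈ D, n * (c.1 + 1) + m * (c.2 + 1) < m * n

/-- Arm length of the cell `c` in `D`. -/
def arm (D : Finset (ℕ × ℕ)) (c : ℕ × ℕ) : ℕ :=
  (D.filter (fun c' => c'.2 = c.2 ∧ c.1 < c'.1)).card

/-- Leg length of the cell `c` in `D`. -/
def leg (D : Finset (ℕ × ℕ)) (c : ℕ × ℕ) : ℕ :=
  (D.filter (fun c' => c'.1 = c.1 ∧ c.2 < c'.2)).card

/-- The statistic `h₊` for slope `n/m`: the number of cells `c ∈ D` with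
`a(c)/(l(c)+1) ≤ n/m < (a(c)+1)/l(c)`. -/
def hplus (m n : ℕ) (D : Finset (ℕ × ℕ)) : ℕ :=
  (D.filter (fun c =>
    n * arm D c ≤ m * (leg D c + 1) ∧ m * leg D c < n * (arm D c + 1))).card

open Finset

section YoungDiagram

variable {D : Finset (ℕ × ℕ)} {m n x y : ℕ}

def rowLen (D : Finset (ℕ × ℕ)) (y : ℕ) : ℕ := #{c ∈ D | c.2 = y}

theorem IsYoung.mem_iff_lt_rowLen (hD : IsYoung D) : (x, y) ∈ D ↔ x < rowLen D y := by
  constructor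
  · intro h
    have hsub : range (x + 1) ×ˢ {y} ⊆ {c ∈ D | c.2 = y} := by
      rintro ⟨a, b⟩ hab
      simp only [mem_product, mem_range, mem_singleton] at hab
      exact mem_filter.2 ⟨hD x y a b h (by omega) hab.2.le, hab.2⟩
    simpa [rowLen] using card_le_card hsub
  · intro h
    by_contra hx
    have hsub : {c ∈ D | c.2 = y} ⊆ range x ×ˢ {y} := by
      rintro ⟨a, b⟩ hab
      obtain ⟨habD, rfl⟩ := mem_filter.1 hab
      simp only [mem_product, mem_range, mem_singleton, and_true]
      by_contra hxa
      exact hx (hD a b x b habD (by omega) le_rfl)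
    have hcard := card_le_card hsub
    rw [card_product, card_range, card_singleton, mul_one] at hcard
    exact hcard.not_gt h

theorem IsYoung.rowLen_succ_le (hD : IsYoung D) (y : ℕ) : rowLen D (y + 1) ≤ rowLen D y :=
  le_of_forall_lt fun x hx =>
    hD.mem_iff_lt_rowLen.1 (hD x (y + 1) x y (hD.mem_iff_lt_rowLen.2 hx) le_rfl y.le_succ)

theorem BelowDiag.snd_add_two_le (hD : BelowDiag m n D) {c : ℕ × ℕ} (hc : c ∈ D) :
    c.2 + 2 ≤ n := by
  have h := hD c hc
  have : m * (c.2 + 1) < m * n := by omega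
  have := Nat.lt_of_mul_lt_mul_left this
  omega

end YoungDiagram

section TwoRow

variable {m p q x : ℕ}

def twoRow (p q : ℕ) : Finset (ℕ × ℕ) := range p ×ˢ {0} ∪ range q ×ˢ {1}

theorem mem_twoRow {y : ℕ} : (x, y) ∈ twoRow p q ↔ x < p ∧ y = 0 ∨ x < q ∧ y = 1 := by
  simp [twoRow, eq_comm]

theorem card_twoRow (p q : ℕ) : #(twoRow p q) = p + q := by
  rw [twoRow, card_union_of_disjoint (disjoint_left.2 fun c h₀ h₁ => by
    simp only [mem_product, mem_singleton] at h₀ h₁; omega)]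
  simp

theorem isYoung_twoRow (hqp : q ≤ p) : IsYoung (twoRow p q) := by
  intro x y x' y' h hx hy
  rw [mem_twoRow] at h ⊢
  omega

theorem belowDiag_twoRow (hp : 3 * p < 2 * m) (hq : 3 * q < m) : BelowDiag m 3 (twoRow p q) := by
  rintro ⟨x, y⟩ h
  rw [mem_twoRow] at h
  rcases h with ⟨hx, rfl⟩ | ⟨hx, rfl⟩ <;> dsimp only <;> omega

theorem IsYoung.eq_twoRow {D : Finset (ℕ × ℕ)} (hD : IsYoung D) (h : ∀ c ∈ D, c.2 ≤ 1) :
    D = twoRow (rowLen D 0) (rowLen D 1) := by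
  ext ⟨x, y⟩
  rw [mem_twoRow, ← hD.mem_iff_lt_rowLen, ← hD.mem_iff_lt_rowLen]
  constructor
  · intro hxy
    have := h _ hxy
    interval_cases y <;> simp [hxy]
  · rintro (⟨hxy, rfl⟩ | ⟨hxy, rfl⟩) <;> exact hxy

theorem card_filter_twoRow (P : ℕ × ℕ → Prop) [DecidablePred P] :
    #{c ∈ twoRow p q | P c} = #{x ∈ range p | P (x, 0)} + #{x ∈ range q | P (x, 1)} := by
  rw [twoRow, filter_union, card_union_of_disjoint, product_singleton, product_singleton,
    filter_map, filter_map, card_map, card_map]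
  · rfl
  · exact disjoint_filter_filter (disjoint_left.2 fun c h₀ h₁ => by
    simp only [mem_product, mem_singleton] at h₀ h₁; omega)

theorem arm_twoRow_zero : arm (twoRow p q) (x, 0) = p - (x + 1) := by
  have h : {c ∈ twoRow p q | c.2 = 0 ∧ x < c.1} = Ico (x + 1) p ×ˢ {0} := by
    ext ⟨a, b⟩
    simp only [mem_filter, mem_twoRow, mem_product, mem_Ico, mem_singleton]
    omega
  simp [arm, h]

theorem arm_twoRow_one : arm (twoRow p q) (x, 1) = q - (x + 1) := by
  have h : {c ∈ twoRow p q | c.2 = 1 ∧ x < c.1} = Ico (x + 1) q ×ˢ {1} := by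
    ext ⟨a, b⟩
    simp only [mem_filter, mem_twoRow, mem_product, mem_Ico, mem_singleton]
    omega
  simp [arm, h]

theorem leg_twoRow_zero : leg (twoRow p q) (x, 0) = if x < q then 1 else 0 := by
  have h : {c ∈ twoRow p q | c.1 = x ∧ 0 < c.2} =
      {c ∈ ({(x, 1)} : Finset (ℕ × ℕ)) | x < q} := by
    ext ⟨a, b⟩
    simp only [mem_filter, mem_twoRow, mem_singleton, Prod.mk.injEq]
    omega
  rw [leg, h, filter_singleton]
  split_ifs <;> rfl

theorem leg_twoRow_one : leg (twoRow p q) (x, 1) = 0 := by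
  have h : {c ∈ twoRow p q | c.1 = x ∧ 1 < c.2} = ∅ := by
    ext ⟨a, b⟩
    simp only [mem_filter, mem_twoRow, notMem_empty, iff_false]
    omega
  rw [leg, h, card_empty]

end TwoRow

def twoRowShapes (m : ℕ) : Set (ℕ × ℕ) :=
  {pq | pq.2 ≤ pq.1 ∧ 3 * pq.1 < 2 * m ∧ 3 * pq.2 < m}

theorem setOf_isYoung_belowDiag_three {m : ℕ} (hm : 0 < m) :
    {D | IsYoung D ∧ BelowDiag m 3 D} = (fun pq => twoRow pq.1 pq.2) '' twoRowShapes m := by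
  ext D
  constructor
  · rintro ⟨hY, hB⟩
    have hrow : ∀ y, 0 < rowLen D y → 3 * rowLen D y + m * (y + 1) < m * 3 := fun y hy => by
      have := hB _ (hY.mem_iff_lt_rowLen.2 (Nat.sub_lt hy one_pos))
      dsimp only at this
      omega
    have h₀ := hrow 0
    have h₁ := hrow 1
    refine ⟨(rowLen D 0, rowLen D 1), ⟨hY.rowLen_succ_le 0, by omega, by omega⟩, ?_⟩
    exact (hY.eq_twoRow fun c hc => by have := hB.snd_add_two_le hc; omega).symm
  · rintro ⟨⟨p, q⟩, ⟨hqp, hp, hq⟩, rfl⟩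
    exact ⟨isYoung_twoRow hqp, belowDiag_twoRow hp hq⟩

theorem hplus_twoRow {m p q : ℕ} (hpq : (p, q) ∈ twoRowShapes m) :
    hplus m 3 (twoRow p q) = q + min (p - q) (m / 3 + 1) + min q (p - m / 3) := by
  obtain ⟨hqp, hp, hq⟩ := hpq
  have row₀ : {x ∈ range p |
      3 * arm (twoRow p q) (x, 0) ≤ m * (leg (twoRow p q) (x, 0) + 1) ∧
        m * leg (twoRow p q) (x, 0) < 3 * (arm (twoRow p q) (x, 0) + 1)} =
      range (min q (p - m / 3)) ∪ Ico (max q (p - m / 3 - 1)) p := by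
    ext x
    simp only [mem_filter, mem_range, mem_union, mem_Ico, arm_twoRow_zero, leg_twoRow_zero]
    split_ifs <;> omega
  have row₁ : {x ∈ range q |
      3 * arm (twoRow p q) (x, 1) ≤ m * (leg (twoRow p q) (x, 1) + 1) ∧
        m * leg (twoRow p q) (x, 1) < 3 * (arm (twoRow p q) (x, 1) + 1)} = range q := by
    refine filter_true_of_mem fun x hx => ?_
    rw [arm_twoRow_one, leg_twoRow_one]
    rw [mem_range] at hx
    omega
  rw [hplus, card_filter_twoRow, row₀, row₁, card_union_of_disjoint, card_range, Nat.card_Ico,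
    card_range]
  · omega
  · exact disjoint_left.2 fun x h₀ h₁ => by simp only [mem_range, mem_Ico] at h₀ h₁; omega

section Arithmetic

variable {m : ℕ}

def phiTwoRow (m : ℕ) (pq : ℕ × ℕ) : ℕ × ℕ :=
  (m - 1 - (pq.1 + pq.2), pq.2 + min (pq.1 - pq.2) (m / 3 + 1) + min pq.2 (pq.1 - m / 3))

theorem injOn_phiTwoRow : Set.InjOn (phiTwoRow m) (twoRowShapes m) := by
  rintro ⟨p, q⟩ ⟨hqp, hp, hq⟩ ⟨p', q'⟩ ⟨hqp', hp', hq'⟩ h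
  simp only [phiTwoRow, Prod.mk.injEq] at h hqp hp hq hqp' hp' hq' ⊢
  omega

theorem image_phiTwoRow (hm : ¬ 3 ∣ m) :
    phiTwoRow m '' twoRowShapes m =
      {ab | ab.1 + ab.2 ≤ m - 1 ∧ m - 1 ≤ ab.1 + 2 * ab.2 ∧ m - 1 ≤ 2 * ab.1 + ab.2} := by
  ext ⟨a, b⟩
  constructor
  · rintro ⟨⟨p, q⟩, ⟨hqp, hp, hq⟩, h⟩
    simp only [phiTwoRow, Prod.mk.injEq] at h hqp hp hq
    simp only [Set.mem_ofPred_eq]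
    omega
  · rintro ⟨h₁, h₂, h₃⟩
    simp only [Set.mem_image, twoRowShapes, phiTwoRow, Set.mem_ofPred_eq, Prod.exists,
      Prod.mk.injEq]
    -- For `p ≤ m/3` the second coordinate is `p`; beyond, it is `2p - m/3` when
    -- `p - q ≤ m/3` and `2q + m/3 + 1` otherwise.
    rcases le_or_gt b (m / 3) with hb | hb
    · exact ⟨b, m - 1 - a - b, by omega⟩
    obtain ⟨t, ht | ht⟩ := Nat.even_or_odd' (b - m / 3)
    · exact ⟨m / 3 + t, m - 1 - a - (m / 3 + t), by omega⟩
    · exact ⟨m - 1 - a - t, t, by omega⟩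

end Arithmetic

theorem phi_injective_image_triangle_general (m : ℕ) (hm3 : Nat.Coprime m 3) :
    Set.InjOn (fun D : Finset (ℕ × ℕ) => ((m - 1) - D.card, hplus m 3 D))
      {D | IsYoung D ∧ BelowDiag m 3 D} ∧
    (fun D : Finset (ℕ × ℕ) => ((m - 1) - D.card, hplus m 3 D)) ''
        {D | IsYoung D ∧ BelowDiag m 3 D} =
      {p : ℕ × ℕ | p.1 + p.2 ≤ m - 1 ∧ m - 1 ≤ p.1 + 2 * p.2 ∧ m - 1 ≤ 2 * p.1 + p.2} := by
  have h3 : ¬ 3 ∣ m := (Nat.prime_three.coprime_iff_not_dvd).1 hm3.symm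
  have hφ : Set.EqOn
      ((fun D : Finset (ℕ × ℕ) => ((m - 1) - D.card, hplus m 3 D)) ∘ fun pq => twoRow pq.1 pq.2)
      (phiTwoRow m) (twoRowShapes m) := by
    rintro ⟨p, q⟩ hpq
    simp only [Function.comp_apply, card_twoRow, hplus_twoRow hpq, phiTwoRow]
  rw [setOf_isYoung_belowDiag_three (by omega), ← Set.image_comp, hφ.image_eq,
    image_phiTwoRow h3]
  exact ⟨(injOn_phiTwoRow.congr hφ.symm).image_of_comp, rfl⟩

/-- **The `(3, m)` case of the symmetry conjecture: structure of the image of `φ`.**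
For `m` coprime to `3` and `δ = m - 1`, the map `D ↦ (δ - |D|, h₊(D))` is injective on
Young diagrams below the diagonal of the `m × 3` rectangle, and its image is the set of
lattice points of the triangle `{(a,b) : a + b ≤ δ, a + 2b ≥ δ, 2a + b ≥ δ}`. -/
theorem phi_injective_image_triangle (m : ℕ) (hm : 0 < m) (hm3 : Nat.Coprime m 3) :
    Set.InjOn (fun D : Finset (ℕ × ℕ) => ((m - 1) - D.card, hplus m 3 D))
      {D | IsYoung D ∧ BelowDiag m 3 D} ∧
    (fun D : Finset (ℕ × ℕ) => ((m - 1) - D.card, hplus m 3 D)) ''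
        {D | IsYoung D ∧ BelowDiag m 3 D} =
      {p : ℕ × ℕ | p.1 + p.2 ≤ m - 1 ∧ m - 1 ≤ p.1 + 2 * p.2 ∧ m - 1 ≤ 2 * p.1 + p.2} :=
  phi_injective_image_triangle_general m hm3
end

section
/- Let m and n be coprime positive integers. Then the number of partitions (Young diagrams) that are simultaneously m-cores and n-cores, i.e. that contain no cell of hook length m and no cell of hook length n, is finite and equals binom(m+n, n)/(m+n). -/
/-- `D` is a `p`-core: no cell of `D` has hook length `p`. -/
def IsCore (p : ℕ) (D : Finset (ℕ × ℕ)) : Prop :=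
  ∀ c ∈ D, arm D c + leg D c + 1 ≠ p

namespace Anderson

open Finset Pointwise

lemma exists_forall_iff_lt {P : ℕ → Prop} (hP : ∀ a b, a ≤ b → P b → P a) (hfin : ∃ b, ¬ P b) :
    ∃ k, ∀ a, P a ↔ a < k := by
  classical
  refine ⟨Nat.find hfin, fun a => ⟨fun ha => ?_, fun ha => ?_⟩⟩
  · by_contra h
    exact Nat.find_spec hfin (hP _ _ (not_lt.mp h) ha)
  · by_contra h
    exact Nat.find_min hfin ha h

def transpose (D : Finset (ℕ × ℕ)) : Finset (ℕ × ℕ) := D.map (Equiv.prodComm ℕ ℕ).toEmbedding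

def rowLen (D : Finset (ℕ × ℕ)) (y : ℕ) : ℕ := #(D.filter (·.2 = y))

def colLen (D : Finset (ℕ × ℕ)) (x : ℕ) : ℕ := rowLen (transpose D) x

section Young

variable {D : Finset (ℕ × ℕ)}

@[simp]
lemma mem_transpose {x y : ℕ} : (x, y) ∈ transpose D ↔ (y, x) ∈ D := by
  simp [transpose, mem_map_equiv]

lemma isYoung_transpose (hD : IsYoung D) : IsYoung (transpose D) := by
  intro x y x' y' h hx hy
  rw [mem_transpose] at h ⊢
  exact hD _ _ _ _ h hy hx

lemma leg_eq_arm_transpose (x y : ℕ) : leg D (x, y) = arm (transpose D) (y, x) := by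
  rw [leg, arm, transpose, filter_map, card_map]
  rfl

lemma mem_iff_lt_rowLen (hD : IsYoung D) {x y : ℕ} : (x, y) ∈ D ↔ x < rowLen D y := by
  obtain ⟨k, hk⟩ : ∃ k, ∀ a, (a, y) ∈ D ↔ a < k := by
    refine exists_forall_iff_lt (fun a b hab hb => hD _ _ _ _ hb hab le_rfl)
      ⟨D.sup Prod.fst + 1, fun h => ?_⟩
    exact (Nat.lt_succ_self _).not_ge (le_sup (f := Prod.fst) h)
  have hrow : D.filter (·.2 = y) = range k ×ˢ {y} := by
    ext ⟨a, b⟩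
    simp only [mem_filter, mem_product, mem_range, mem_singleton]
    constructor
    · rintro ⟨h, rfl⟩
      exact ⟨(hk a).mp h, rfl⟩
    · rintro ⟨ha, rfl⟩
      exact ⟨(hk a).mpr ha, rfl⟩
  rw [hk, rowLen, hrow, card_product, card_range, card_singleton, mul_one]

lemma mem_iff_lt_colLen (hD : IsYoung D) {x y : ℕ} : (x, y) ∈ D ↔ y < colLen D x := by
  rw [colLen, ← mem_iff_lt_rowLen (isYoung_transpose hD), mem_transpose]

lemma rowLen_antitone (hD : IsYoung D) {y y' : ℕ} (h : y' ≤ y) : rowLen D y ≤ rowLen D y' := by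
  by_contra hlt
  have := hD _ _ _ _ ((mem_iff_lt_rowLen hD).mpr (not_le.mp hlt)) le_rfl h
  exact lt_irrefl _ ((mem_iff_lt_rowLen hD).mp this)

lemma colLen_antitone (hD : IsYoung D) {x x' : ℕ} (h : x' ≤ x) : colLen D x ≤ colLen D x' :=
  rowLen_antitone (isYoung_transpose hD) h

lemma arm_eq (hD : IsYoung D) (x y : ℕ) : arm D (x, y) = rowLen D y - (x + 1) := by
  have : D.filter (fun c => c.2 = y ∧ x < c.1) = Ioo x (rowLen D y) ×ˢ {y} := by
    ext ⟨a, b⟩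
    simp only [mem_filter, mem_product, mem_Ioo, mem_singleton]
    constructor
    · rintro ⟨h, rfl, hxa⟩
      exact ⟨⟨hxa, (mem_iff_lt_rowLen hD).mp h⟩, rfl⟩
    · rintro ⟨⟨hxa, ha⟩, rfl⟩
      exact ⟨(mem_iff_lt_rowLen hD).mpr ha, rfl, hxa⟩
  rw [arm, this, card_product, Nat.card_Ioo, card_singleton, mul_one, Nat.sub_sub]

lemma leg_eq (hD : IsYoung D) (x y : ℕ) : leg D (x, y) = colLen D x - (y + 1) := by
  rw [leg_eq_arm_transpose, arm_eq (isYoung_transpose hD), colLen]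

end Young

/- `beta D y` is the hook length of the cell `(0, y)`, so `betaSet D` is the β-set of `D`; the
gaps `gap D x` enumerate its complement in `ℕ`. -/
def beta (D : Finset (ℕ × ℕ)) (y : ℕ) : ℕ := rowLen D y + (colLen D 0 - 1 - y)

def gap (D : Finset (ℕ × ℕ)) (x : ℕ) : ℕ := x + colLen D 0 - colLen D x

def betaSet (D : Finset (ℕ × ℕ)) : Finset ℕ := (range (colLen D 0)).image (beta D)

def IsCoreSet (p : ℕ) (H : Finset ℕ) : Prop := ∀ k ∉ H, k + p ∉ H

section Beta

variable {D : Finset (ℕ × ℕ)}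

lemma mem_betaSet {h : ℕ} : h ∈ betaSet D ↔ ∃ y < colLen D 0, beta D y = h := by
  simp [betaSet]

lemma lt_colLen_zero (hD : IsYoung D) {x y : ℕ} (h : (x, y) ∈ D) : y < colLen D 0 :=
  (mem_iff_lt_colLen hD).mp (hD _ _ _ _ h (Nat.zero_le x) le_rfl)

lemma hook_add_gap (hD : IsYoung D) {x y : ℕ} (h : (x, y) ∈ D) :
    arm D (x, y) + leg D (x, y) + 1 + gap D x = beta D y := by
  have hx := (mem_iff_lt_rowLen hD).mp h
  have hy := (mem_iff_lt_colLen hD).mp h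
  have hc := colLen_antitone hD (Nat.zero_le x)
  rw [arm_eq hD, leg_eq hD, gap, beta]
  omega

lemma beta_lt_gap (hD : IsYoung D) {x y : ℕ} (hy : y < colLen D 0) (h : (x, y) ∉ D) :
    beta D y < gap D x := by
  have hrow : rowLen D y ≤ x := not_lt.mp ((mem_iff_lt_rowLen hD).not.mp h)
  have hcol : colLen D x ≤ y := not_lt.mp ((mem_iff_lt_colLen hD).not.mp h)
  have hc := colLen_antitone hD (Nat.zero_le x)
  rw [gap, beta]
  omega

lemma gap_lt_beta_iff (hD : IsYoung D) {x y : ℕ} (hy : y < colLen D 0) :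
    gap D x < beta D y ↔ (x, y) ∈ D := by
  refine ⟨fun h => ?_, fun h => ?_⟩
  · by_contra h'
    exact (beta_lt_gap hD hy h').not_gt h
  · have := hook_add_gap hD h
    omega

lemma gap_notMem_betaSet (hD : IsYoung D) (x : ℕ) : gap D x ∉ betaSet D := by
  rw [mem_betaSet]
  rintro ⟨y, hy, heq⟩
  by_cases h : (x, y) ∈ D
  · exact ((gap_lt_beta_iff hD hy).mpr h).ne' heq
  · exact (beta_lt_gap hD hy h).ne heq

lemma gap_zero : gap D 0 = 0 := by
  simp [gap]

lemma le_gap (hD : IsYoung D) (x : ℕ) : x ≤ gap D x := by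
  have := colLen_antitone hD (Nat.zero_le x)
  rw [gap]
  omega

lemma exists_gap_eq (hD : IsYoung D) {k : ℕ} (hk : k ∉ betaSet D) : ∃ x, gap D x = k := by
  obtain ⟨x, hle, hlt⟩ : ∃ x, gap D x ≤ k ∧ k < gap D (x + 1) := by
    have hex : ∃ x, k < gap D (x + 1) := ⟨k, Nat.lt_succ_self k |>.trans_le (le_gap hD _)⟩
    refine ⟨Nat.find hex, ?_, Nat.find_spec hex⟩
    rcases Nat.eq_zero_or_pos (Nat.find hex) with h0 | hpos
    · rw [h0, gap_zero]
      exact Nat.zero_le k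
    · have := Nat.find_min hex (Nat.sub_lt hpos one_pos)
      rwa [Nat.sub_one_add_one hpos.ne', not_lt] at this
  refine ⟨x, le_antisymm hle (not_lt.mp fun hgt => hk ?_)⟩
  -- `k` lies strictly between two consecutive gaps, so it is the β-number of a row ending in
  -- column `x`.
  have hc1 := colLen_antitone hD (Nat.le_add_right x 1)
  have hc0 := colLen_antitone hD (Nat.zero_le x)
  have hgx : gap D x = x + colLen D 0 - colLen D x := rfl
  have hgx1 : gap D (x + 1) = x + 1 + colLen D 0 - colLen D (x + 1) := rfl
  set y := colLen D x - (k - gap D x)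
  have hin : x < rowLen D y := (mem_iff_lt_rowLen hD).mp ((mem_iff_lt_colLen hD).mpr (by omega))
  have hout : rowLen D y ≤ x + 1 :=
    not_lt.mp ((mem_iff_lt_rowLen hD).not.mp ((mem_iff_lt_colLen hD).not.mpr (by omega)))
  exact mem_betaSet.mpr ⟨y, by omega, by rw [beta]; omega⟩

lemma zero_notMem_betaSet (hD : IsYoung D) : 0 ∉ betaSet D :=
  gap_zero (D := D) ▸ gap_notMem_betaSet hD 0

lemma isCore_iff_isCoreSet (hD : IsYoung D) {p : ℕ} : IsCore p D ↔ IsCoreSet p (betaSet D) := by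
  constructor
  · intro hcore k hk hkp
    obtain ⟨x, rfl⟩ := exists_gap_eq hD hk
    obtain ⟨y, hy, hbeta⟩ := mem_betaSet.mp hkp
    have hp : p ≠ 0 := by
      rintro rfl
      exact hk hkp
    have hxy : (x, y) ∈ D := (gap_lt_beta_iff hD hy).mp (by omega)
    exact hcore _ hxy (by have := hook_add_gap hD hxy; omega)
  · rintro hset ⟨x, y⟩ hxy hp
    apply hset _ (gap_notMem_betaSet hD x)
    rw [← hp, add_comm, hook_add_gap hD hxy]
    exact mem_betaSet.mpr ⟨y, lt_colLen_zero hD hxy, rfl⟩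

end Beta

def betaCount (H : Finset ℕ) (x y : ℕ) : ℕ := #(H.filter (fun h => x + #H ≤ h + y))

/- Row `y` of the diagram with β-set `H` has length `h - (#H - 1 - y)`, where `h` is the
`(y + 1)`-st largest element of `H`. -/
def ofBetaSet (H : Finset ℕ) : Finset (ℕ × ℕ) :=
  (range (H.sup id + #H + 1) ×ˢ range (H.sup id + #H + 1)).filter
    (fun c => c.2 < betaCount H c.1 c.2)

section OfBetaSet

variable {D : Finset (ℕ × ℕ)} {H : Finset ℕ}

lemma beta_lt_beta (hD : IsYoung D) {y y' : ℕ} (hy' : y' < colLen D 0) (h : y < y') :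
    beta D y' < beta D y := by
  have := rowLen_antitone hD h.le
  rw [beta, beta]
  omega

lemma beta_injOn (hD : IsYoung D) : Set.InjOn (beta D) (range (colLen D 0)) := by
  intro y hy y' hy' h
  rw [coe_range, Set.mem_Iio] at hy hy'
  rcases lt_trichotomy y y' with hlt | rfl | hgt
  · exact absurd h (beta_lt_beta hD hy' hlt).ne'
  · rfl
  · exact absurd h (beta_lt_beta hD hy hgt).ne

lemma card_betaSet (hD : IsYoung D) : #(betaSet D) = colLen D 0 :=
  (card_image_of_injOn (beta_injOn hD)).trans (card_range _)

lemma mem_iff_lt_betaCount (hD : IsYoung D) {x y : ℕ} :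
    (x, y) ∈ D ↔ y < betaCount (betaSet D) x y := by
  set r := colLen D 0
  have hcount : betaCount (betaSet D) x y =
      #((range r).filter (fun y' => x + r ≤ beta D y' + y)) := by
    rw [betaCount, card_betaSet hD, betaSet, filter_image]
    exact card_image_of_injOn ((beta_injOn hD).mono (filter_subset _ _))
  rw [hcount]
  constructor
  · intro h
    have hy := lt_colLen_zero hD h
    have hx := (mem_iff_lt_rowLen hD).mp h
    refine Nat.lt_of_succ_le (le_of_eq_of_le (card_range _).symm (card_le_card fun y' hy' => ?_))
    rw [mem_range] at hy'
    have := rowLen_antitone hD (Nat.le_of_lt_succ hy')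
    rw [mem_filter, mem_range, beta]
    omega
  · intro h
    by_contra hxy
    have hx := not_lt.mp ((mem_iff_lt_rowLen hD).not.mp hxy)
    refine h.not_ge (le_of_le_of_eq (card_le_card fun y' hy' => ?_) (card_range y))
    rw [mem_filter, mem_range, beta] at hy'
    rw [mem_range]
    by_contra hyy
    have := rowLen_antitone hD (not_lt.mp hyy)
    omega

lemma betaCount_le (x y : ℕ) : betaCount H x y ≤ #H := card_filter_le _ _

lemma mem_ofBetaSet {x y : ℕ} : (x, y) ∈ ofBetaSet H ↔ y < betaCount H x y := by
  rw [ofBetaSet, mem_filter, mem_product, mem_range, mem_range, and_iff_right_iff_imp]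
  intro hy
  obtain ⟨h, hh⟩ : (H.filter (fun h => x + #H ≤ h + y)).Nonempty :=
    card_pos.mp (Nat.zero_lt_of_lt hy)
  rw [mem_filter] at hh
  have hle : h ≤ H.sup id := le_sup (f := id) hh.1
  have := (betaCount_le x y).trans_lt' hy
  omega

lemma betaCount_anti_left {x x' y : ℕ} (h : x' ≤ x) : betaCount H x y ≤ betaCount H x' y :=
  card_le_card (monotone_filter_right _ fun _ hle => by omega)

lemma betaCount_le_add {x y y' : ℕ} (h : y' ≤ y) :
    betaCount H x y ≤ betaCount H x y' + (y - y') := by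
  calc betaCount H x y
      ≤ #(H.filter (fun h => x + #H ≤ h + y')) + #(Ico (x + #H - y) (x + #H - y')) := by
        refine (card_le_card fun h hh => ?_).trans (card_union_le _ _)
        rw [mem_filter] at hh
        rw [mem_union, mem_filter, mem_Ico]
        by_cases hc : x + #H ≤ h + y'
        · exact Or.inl ⟨hh.1, hc⟩
        · exact Or.inr (by omega)
    _ ≤ betaCount H x y' + (y - y') := by
        rw [Nat.card_Ico, betaCount]
        omega

lemma isYoung_ofBetaSet : IsYoung (ofBetaSet H) := by
  intro x y x' y' h hx hy
  rw [mem_ofBetaSet] at h ⊢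
  have := betaCount_le_add (H := H) (x := x) hy
  have := betaCount_anti_left (H := H) (y := y') hx
  omega

lemma colLen_ofBetaSet (h0 : 0 ∉ H) : colLen (ofBetaSet H) 0 = #H := by
  refine eq_of_forall_lt_iff fun k => ?_
  rw [← mem_iff_lt_colLen isYoung_ofBetaSet, mem_ofBetaSet]
  refine ⟨fun h => h.trans_le (betaCount_le 0 k), fun hk => ?_⟩
  have hsmall : #(H.filter (fun h => ¬ 0 + #H ≤ h + k)) ≤ #H - k - 1 := by
    refine (card_le_card fun h hh => ?_).trans_eq (Nat.card_Ico 1 (#H - k))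
    rw [mem_filter] at hh
    have : h ≠ 0 := fun h' => h0 (h' ▸ hh.1)
    rw [mem_Ico]
    omega
  have := card_filter_add_card_filter_not (s := H) (fun h => 0 + #H ≤ h + k)
  rw [betaCount]
  omega

lemma beta_ofBetaSet_mem (h0 : 0 ∉ H) {y : ℕ} (hy : y < #H) : beta (ofBetaSet H) y ∈ H := by
  have hY := isYoung_ofBetaSet (H := H)
  have hpos : 0 < rowLen (ofBetaSet H) y :=
    (mem_iff_lt_rowLen hY).mp ((mem_iff_lt_colLen hY).mpr (by rwa [colLen_ofBetaSet h0]))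
  set L := rowLen (ofBetaSet H) y
  have hin : y < betaCount H (L - 1) y := mem_ofBetaSet.mp ((mem_iff_lt_rowLen hY).mpr (by omega))
  have hout : betaCount H L y ≤ y :=
    not_lt.mp (mem_ofBetaSet.not.mp ((mem_iff_lt_rowLen hY).not.mpr (lt_irrefl L)))
  obtain ⟨h, hh, hnot⟩ : ∃ h ∈ H.filter (fun h => L - 1 + #H ≤ h + y),
      h ∉ H.filter (fun h => L + #H ≤ h + y) := by
    by_contra! hsub
    exact (card_le_card hsub).not_gt (by rw [← betaCount, ← betaCount]; omega)
  rw [mem_filter] at hh hnot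
  have hlt : h + y < L + #H := not_le.mp fun hc => hnot ⟨hh.1, hc⟩
  rw [beta, colLen_ofBetaSet h0]
  convert hh.1 using 1
  omega

lemma betaSet_ofBetaSet (h0 : 0 ∉ H) : betaSet (ofBetaSet H) = H := by
  refine eq_of_subset_of_card_le (fun h hh => ?_) ?_
  · obtain ⟨y, hy, rfl⟩ := mem_betaSet.mp hh
    exact beta_ofBetaSet_mem h0 (colLen_ofBetaSet h0 ▸ hy)
  · rw [card_betaSet isYoung_ofBetaSet, colLen_ofBetaSet h0]

lemma ofBetaSet_betaSet (hD : IsYoung D) : ofBetaSet (betaSet D) = D := by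
  ext ⟨x, y⟩
  rw [mem_ofBetaSet, ← mem_iff_lt_betaCount hD]

end OfBetaSet

lemma mem_of_add_closed {m n : ℕ} (hmn : m.Coprime n) {S : Set ℕ} (h0 : 0 ∈ S)
    (hm : ∀ x ∈ S, x + m ∈ S) (hn : ∀ x ∈ S, x + n ∈ S) {x : ℕ} (hx : (m - 1) * (n - 1) ≤ x) :
    x ∈ S := by
  have hmul : ∀ a b, a * m + b * n ∈ S := by
    intro a b
    induction a with
    | zero =>
      induction b with
      | zero => simpa using h0
      | succ b ih => simpa [add_mul, add_assoc] using hn _ ih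
    | succ a ih => simpa [add_mul, add_right_comm] using hm _ ih
  obtain ⟨a, b, rfl⟩ := Nat.exists_add_mul_eq_of_gcd_dvd_of_mul_pred_le m n x
    (by rw [hmn.gcd_eq_one]; exact one_dvd x) hx
  exact hmul a b

lemma lt_mul_of_mem {m n : ℕ} (hmn : m.Coprime n) {H : Finset ℕ} (h0 : 0 ∉ H)
    (hm : IsCoreSet m H) (hn : IsCoreSet n H) {x : ℕ} (hx : x ∈ H) : x < m * n := by
  by_contra hle
  exact mem_of_add_closed (S := {x | x ∉ H}) hmn h0 hm hn
    ((Nat.mul_le_mul (Nat.sub_le m 1) (Nat.sub_le n 1)).trans (not_lt.mp hle)) hx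

section Words

variable (m n : ℕ)

/- A word `A ⊆ ℤ/(m+n)` describes the periodic lattice path with step `-m` at positions in `A`
and `+n` elsewhere. -/
def step (A : Finset (ZMod (m + n))) (i : ℕ) : ℤ := if (i : ZMod (m + n)) ∈ A then -m else n

def height (A : Finset (ZMod (m + n))) (j : ℕ) : ℤ := ∑ i ∈ range j, step m n A i

def IsNonneg (A : Finset (ZMod (m + n))) : Prop := ∀ j, 0 ≤ height m n A j

open Classical in
noncomputable def nonnegWords [NeZero (m + n)] : Finset (Finset (ZMod (m + n))) :=
  (univ.powersetCard n).filter (IsNonneg m n)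

variable {m n} {A : Finset (ZMod (m + n))}

lemma mem_nonnegWords [NeZero (m + n)] : A ∈ nonnegWords m n ↔ #A = n ∧ IsNonneg m n A := by
  simp [nonnegWords]

@[simp]
lemma height_zero : height m n A 0 = 0 := sum_range_zero _

lemma height_succ (j : ℕ) : height m n A (j + 1) = height m n A j + step m n A j :=
  sum_range_succ _ _

lemma step_add_period (i : ℕ) : step m n A (i + (m + n)) = step m n A i := by
  simp [step]

lemma card_filter_range_natCast_mem {N : ℕ} [NeZero N] (A : Finset (ZMod N)) :
    #((range N).filter (fun i : ℕ => (i : ZMod N) ∈ A)) = #A := by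
  rw [← card_image_of_injective A (ZMod.val_injective N)]
  congr 1
  ext i
  simp only [mem_filter, mem_range, mem_image]
  constructor
  · rintro ⟨hi, hA⟩
    exact ⟨_, hA, ZMod.val_cast_of_lt hi⟩
  · rintro ⟨a, ha, rfl⟩
    exact ⟨ZMod.val_lt a, by rwa [ZMod.natCast_zmod_val]⟩

lemma height_period [NeZero (m + n)] : height m n A (m + n) = (m + n) * (n - #A) := by
  have hsplit := card_filter_add_card_filter_not (s := range (m + n))
    (fun i : ℕ => (i : ZMod (m + n)) ∈ A)
  rw [card_filter_range_natCast_mem, card_range] at hsplit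
  simp only [height, step]
  rw [sum_ite, sum_const, sum_const, card_filter_range_natCast_mem, nsmul_eq_mul, nsmul_eq_mul]
  have : (#((range (m + n)).filter (fun i : ℕ => (i : ZMod (m + n)) ∉ A)) : ℤ) = m + n - #A := by
    omega
  rw [this]
  ring

lemma height_add_period [NeZero (m + n)] (j : ℕ) :
    height m n A (j + (m + n)) = height m n A j + (m + n) * (n - #A) := by
  induction j with
  | zero => simp [height_period]
  | succ j ih =>
    rw [add_right_comm, height_succ, ih, step_add_period, height_succ]
    ring

lemma height_periodic [NeZero (m + n)] (hA : #A = n) : Function.Periodic (height m n A) (m + n) :=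
  fun j => by simp [height_add_period, hA]

lemma cast_height (j : ℕ) : (height m n A j : ZMod (m + n)) = j * n := by
  induction j with
  | zero => simp
  | succ j ih =>
    have hmn : ((m + n : ℕ) : ZMod (m + n)) = 0 := ZMod.natCast_self _
    rw [height_succ, Int.cast_add, ih, step]
    split_ifs
    · push_cast at hmn ⊢
      linear_combination -hmn
    · push_cast
      ring

end Words

section Cyclic

variable {m n : ℕ} {A : Finset (ZMod (m + n))}

lemma isUnit_natCast_of_coprime (hmn : m.Coprime n) : IsUnit (n : ZMod (m + n)) :=
  (ZMod.isUnit_iff_coprime n (m + n)).mpr (Nat.coprime_add_self_right.mpr hmn.symm)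

lemma height_neg_vadd (i j : ℕ) :
    height m n (-(i : ZMod (m + n)) +ᵥ A) j + height m n A i = height m n A (i + j) := by
  induction j with
  | zero => simp
  | succ j ih =>
    have hstep : step m n (-(i : ZMod (m + n)) +ᵥ A) j = step m n A (i + j) := by
      simp only [step, mem_neg_vadd_finset_iff, vadd_eq_add, Nat.cast_add]
    rw [height_succ, ← add_assoc, height_succ, hstep, ← ih]
    ring

variable [NeZero (m + n)]

lemma isNonneg_neg_vadd_iff (hA : #A = n) (i : ℕ) :
    IsNonneg m n (-(i : ZMod (m + n)) +ᵥ A) ↔ ∀ j, height m n A i ≤ height m n A j := by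
  constructor
  · intro hnonneg j
    have hi : i ≤ j + i * (m + n) := le_add_left (Nat.le_mul_of_pos_right i (NeZero.pos _))
    have := height_neg_vadd (A := A) i (j + i * (m + n) - i)
    have hper : height m n A (j + i * (m + n)) = height m n A j := by
      simpa using (height_periodic hA).nat_mul i j
    rw [Nat.add_sub_cancel' hi, hper] at this
    linarith [hnonneg (j + i * (m + n) - i)]
  · intro hmin j
    linarith [height_neg_vadd (A := A) i j, hmin (i + j)]

lemma isNonneg_vadd_iff (hA : #A = n) (k : ZMod (m + n)) :
    IsNonneg m n (k +ᵥ A) ↔ ∀ j, height m n A (-k).val ≤ height m n A j := by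
  rw [← isNonneg_neg_vadd_iff hA, ZMod.natCast_zmod_val, neg_neg]

/-- The cycle lemma. -/
lemma existsUnique_isNonneg_vadd (hmn : m.Coprime n) (hA : #A = n) :
    ∃! k : ZMod (m + n), IsNonneg m n (k +ᵥ A) := by
  obtain ⟨i, -, hmin⟩ := exists_min_image (range (m + n)) (height m n A)
    ⟨0, mem_range.mpr (NeZero.pos _)⟩
  have hmin' : ∀ j, height m n A i ≤ height m n A j := fun j => by
    rw [← (height_periodic hA).map_mod_nat j]
    exact hmin _ (mem_range.mpr (Nat.mod_lt _ (NeZero.pos _)))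
  refine ⟨-(i : ZMod (m + n)), (isNonneg_neg_vadd_iff hA i).mpr hmin', fun k hk => ?_⟩
  have heq : height m n A (-k).val = height m n A i :=
    le_antisymm ((isNonneg_vadd_iff hA k).mp hk i) (hmin' _)
  have hcast := congrArg (fun z : ℤ => (z : ZMod (m + n))) heq
  simp only [cast_height, ZMod.natCast_zmod_val] at hcast
  rw [← neg_neg k, (isUnit_natCast_of_coprime hmn).mul_right_cancel hcast]

lemma card_nonnegWords_mul (hmn : m.Coprime n) :
    #(nonnegWords m n) * (m + n) = (m + n).choose n := by
  set G := nonnegWords m n ×ˢ (univ : Finset (ZMod (m + n))) with hGdef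
  have hG : ∀ p, p ∈ G ↔ #p.1 = n ∧ IsNonneg m n p.1 := fun p => by
    simp [hGdef, mem_nonnegWords]
  have himage : univ.powersetCard n = G.image (fun p => p.2 +ᵥ p.1) := by
    ext B
    simp only [mem_powersetCard, subset_univ, true_and, mem_image, hG, Prod.exists]
    constructor
    · intro hB
      obtain ⟨k, hk, -⟩ := existsUnique_isNonneg_vadd hmn hB
      exact ⟨k +ᵥ B, -k, ⟨by rwa [card_vadd_finset], hk⟩, neg_vadd_vadd k B⟩
    · rintro ⟨A, k, ⟨hA, -⟩, rfl⟩
      rwa [card_vadd_finset]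
  have hinj : Set.InjOn (fun p : Finset (ZMod (m + n)) × ZMod (m + n) => p.2 +ᵥ p.1) G := by
    rintro ⟨A, k⟩ hp ⟨A', k'⟩ hp' h
    rw [mem_coe, hG] at hp hp'
    simp only at h
    -- `A` and `A'` are the nonnegative rotations `-k` and `-k'` of the same word `k +ᵥ A`
    have hB : #(k +ᵥ A) = n := by rw [card_vadd_finset, hp.1]
    have hkk : -k = -k' := (existsUnique_isNonneg_vadd hmn hB).unique
      (by rw [neg_vadd_vadd]; exact hp.2) (by rw [h, neg_vadd_vadd]; exact hp'.2)
    obtain rfl := neg_injective hkk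
    rw [AddAction.injective k h]
  calc #(nonnegWords m n) * (m + n) = #G := by
        rw [card_product, card_univ, ZMod.card (m + n)]
    _ = #(univ.powersetCard n) := by rw [himage, card_image_of_injOn hinj]
    _ = (m + n).choose n := by rw [card_powersetCard, card_univ, ZMod.card (m + n)]

end Cyclic

section LeastGap

variable {N : ℕ} [NeZero N] {H : Finset ℕ}

lemma exists_notMem_natCast_eq (H : Finset ℕ) (r : ZMod N) :
    ∃ x, x ∉ H ∧ (x : ZMod N) = r := by
  refine ⟨r.val + N * (H.sup id + 1), fun hx => ?_, by simp⟩
  have h1 := le_sup (f := id) hx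
  have h2 := Nat.le_mul_of_pos_left (H.sup id + 1) (NeZero.pos N)
  simp only [id] at h1
  omega

def leastGap (N : ℕ) [NeZero N] (H : Finset ℕ) (r : ZMod N) : ℕ :=
  Nat.find (exists_notMem_natCast_eq H r)

lemma leastGap_notMem (r : ZMod N) : leastGap N H r ∉ H :=
  (Nat.find_spec (exists_notMem_natCast_eq H r)).1

@[simp]
lemma natCast_leastGap (r : ZMod N) : (leastGap N H r : ZMod N) = r :=
  (Nat.find_spec (exists_notMem_natCast_eq H r)).2

lemma leastGap_le {x : ℕ} {r : ZMod N} (hx : x ∉ H) (hr : (x : ZMod N) = r) :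
    leastGap N H r ≤ x :=
  Nat.find_min' _ ⟨hx, hr⟩

lemma leastGap_zero (h0 : 0 ∉ H) : leastGap N H 0 = 0 :=
  Nat.le_zero.mp (leastGap_le h0 Nat.cast_zero)

end LeastGap

section CoreSets

variable {m n : ℕ} {H : Finset ℕ}

lemma notMem_add_mul (hm : IsCoreSet m H) (hn : IsCoreSet n H) {x : ℕ} (hx : x ∉ H) (k : ℕ) :
    x + k * (m + n) ∉ H := by
  induction k with
  | zero => simpa using hx
  | succ k ih =>
    rw [add_mul, one_mul, ← add_assoc, ← add_assoc]
    exact hn _ (hm _ ih)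

variable [NeZero (m + n)]

lemma leastGap_add_right (hm : IsCoreSet m H) (hn : IsCoreSet n H) (r : ZMod (m + n)) :
    leastGap (m + n) H (r + n) = leastGap (m + n) H r + n ∨
      leastGap (m + n) H (r + n) + m = leastGap (m + n) H r := by
  set u := leastGap (m + n) H r
  set v := leastGap (m + n) H (r + n)
  have hv : v ≤ u + n := leastGap_le (hn _ (leastGap_notMem r)) (by push_cast; simp [u])
  have hu : u ≤ v + m := by
    refine leastGap_le (hm _ (leastGap_notMem _)) ?_
    have : ((m + n : ℕ) : ZMod (m + n)) = 0 := ZMod.natCast_self _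
    push_cast at this ⊢
    simp only [v, natCast_leastGap]
    linear_combination this
  have hdvd : (m + n) ∣ u + n - v := by
    refine (Nat.modEq_iff_dvd' hv).mp ((ZMod.natCast_eq_natCast_iff _ _ _).mp ?_)
    simp [u, v]
  rcases Nat.eq_zero_or_pos (u + n - v) with h | h
  · exact Or.inl (by omega)
  · have := Nat.eq_of_dvd_of_lt_two_mul h.ne' hdvd (by omega)
    exact Or.inr (by omega)

variable (m n) in
def toWord (H : Finset ℕ) : Finset (ZMod (m + n)) :=
  univ.filter fun j => leastGap (m + n) H (j * n + n) + m = leastGap (m + n) H (j * n)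

lemma height_toWord (h0 : 0 ∉ H) (hm : IsCoreSet m H) (hn : IsCoreSet n H) (j : ℕ) :
    height m n (toWord m n H) j = leastGap (m + n) H (j * n) := by
  induction j with
  | zero => simp [leastGap_zero h0]
  | succ j ih =>
    rw [height_succ, ih, step, Nat.cast_succ, add_mul, one_mul]
    split_ifs with hj
    · have := (mem_filter.mp hj).2
      omega
    · have : ¬ leastGap (m + n) H (j * n + n) + m = leastGap (m + n) H (j * n) :=
        fun h => hj (mem_filter.mpr ⟨mem_univ _, h⟩)
      rcases leastGap_add_right hm hn (j * n) with h | h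
      · omega
      · exact absurd h this

lemma card_toWord (h0 : 0 ∉ H) (hm : IsCoreSet m H) (hn : IsCoreSet n H) :
    #(toWord m n H) = n := by
  have h := height_toWord h0 hm hn (m + n)
  rw [height_period, ZMod.natCast_self, zero_mul, leastGap_zero h0, Nat.cast_zero,
    mul_eq_zero] at h
  have := NeZero.ne (m + n)
  omega

lemma isNonneg_toWord (h0 : 0 ∉ H) (hm : IsCoreSet m H) (hn : IsCoreSet n H) :
    IsNonneg m n (toWord m n H) := fun j => by
  rw [height_toWord h0 hm hn]
  exact Nat.cast_nonneg _

lemma notMem_iff_exists_leastGap (hmn : m.Coprime n) (hm : IsCoreSet m H) (hn : IsCoreSet n H)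
    {x : ℕ} : x ∉ H ↔ ∃ j k : ℕ, x = leastGap (m + n) H (j * n) + k * (m + n) := by
  refine ⟨fun hx => ?_, fun ⟨j, k, hx⟩ => hx ▸ notMem_add_mul hm hn (leastGap_notMem _) k⟩
  obtain ⟨u, hu⟩ := isUnit_natCast_of_coprime hmn
  set j := ((x : ZMod (m + n)) * ↑u⁻¹).val
  have hj : (j : ZMod (m + n)) * n = x := by
    rw [ZMod.natCast_zmod_val, ← hu, Units.inv_mul_cancel_right]
  have hle := leastGap_le hx hj.symm
  obtain ⟨k, hk⟩ := (Nat.modEq_iff_dvd' hle).mp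
    ((ZMod.natCast_eq_natCast_iff _ _ _).mp (by rw [natCast_leastGap, hj]))
  exact ⟨j, k, by rw [mul_comm k]; omega⟩

end CoreSets

section OfWord

variable {m n : ℕ} {A : Finset (ZMod (m + n))}

variable (m n) in
def gapsOf (A : Finset (ZMod (m + n))) : Set ℕ :=
  {x | ∃ j k : ℕ, (x : ℤ) = height m n A j + k * (m + n)}

variable (m n) in
open Classical in
noncomputable def ofWord (A : Finset (ZMod (m + n))) : Finset ℕ :=
  (range (m * n)).filter (· ∉ gapsOf m n A)

lemma zero_mem_gapsOf : 0 ∈ gapsOf m n A := ⟨0, 0, by simp⟩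

lemma add_right_mem_gapsOf {x : ℕ} (hx : x ∈ gapsOf m n A) : x + n ∈ gapsOf m n A := by
  obtain ⟨j, k, hx⟩ := hx
  have hs := height_succ (A := A) j
  rw [step] at hs
  split_ifs at hs
  · exact ⟨j + 1, k + 1, by push_cast; linarith⟩
  · exact ⟨j + 1, k, by push_cast; linarith⟩

variable [NeZero (m + n)]

lemma add_left_mem_gapsOf (hA : #A = n) {x : ℕ} (hx : x ∈ gapsOf m n A) :
    x + m ∈ gapsOf m n A := by
  obtain ⟨j, k, hx⟩ := hx
  -- step back from position `j + (m + n)`, where the height is the same as at `j`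
  have hs := height_succ (A := A) (j + (m + n) - 1)
  rw [Nat.sub_add_cancel (by have := NeZero.pos (m + n); omega), height_periodic hA] at hs
  rw [step] at hs
  split_ifs at hs
  · exact ⟨_, k, by push_cast; linarith⟩
  · exact ⟨_, k + 1, by push_cast; linarith⟩

lemma notMem_ofWord_iff (hmn : m.Coprime n) (hA : #A = n) {x : ℕ} :
    x ∉ ofWord m n A ↔ x ∈ gapsOf m n A := by
  classical
  rw [ofWord, mem_filter, mem_range, not_and, not_not]
  refine ⟨fun h => ?_, fun h _ => h⟩
  by_cases hx : x < m * n
  · exact h hx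
  · exact mem_of_add_closed hmn zero_mem_gapsOf (fun _ => add_left_mem_gapsOf hA)
      (fun _ => add_right_mem_gapsOf)
      ((Nat.mul_le_mul (Nat.sub_le m 1) (Nat.sub_le n 1)).trans (not_lt.mp hx))

lemma zero_notMem_ofWord (hmn : m.Coprime n) (hA : #A = n) : 0 ∉ ofWord m n A :=
  (notMem_ofWord_iff hmn hA).mpr zero_mem_gapsOf

lemma isCoreSet_left_ofWord (hmn : m.Coprime n) (hA : #A = n) : IsCoreSet m (ofWord m n A) :=
  fun _ hx => (notMem_ofWord_iff hmn hA).mpr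
    (add_left_mem_gapsOf hA ((notMem_ofWord_iff hmn hA).mp hx))

lemma isCoreSet_right_ofWord (hmn : m.Coprime n) (hA : #A = n) : IsCoreSet n (ofWord m n A) :=
  fun _ hx => (notMem_ofWord_iff hmn hA).mpr
    (add_right_mem_gapsOf ((notMem_ofWord_iff hmn hA).mp hx))

lemma leastGap_ofWord (hmn : m.Coprime n) (hA : #A = n) (hnonneg : IsNonneg m n A) (j : ℕ) :
    (leastGap (m + n) (ofWord m n A) (j * n) : ℤ) = height m n A j := by
  obtain ⟨h, hh⟩ := Int.eq_ofNat_of_zero_le (hnonneg j)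
  obtain ⟨j', k, hg⟩ := (notMem_ofWord_iff hmn hA).mp
    (leastGap_notMem (H := ofWord m n A) ((j : ZMod (m + n)) * (n : ZMod (m + n))))
  have hres : (j' : ZMod (m + n)) = j := by
    have := congrArg (fun z : ℤ => (z : ZMod (m + n))) hg
    have hN : (m : ZMod (m + n)) + n = 0 := by exact_mod_cast ZMod.natCast_self (m + n)
    push_cast [cast_height] at this
    rw [natCast_leastGap, hN, mul_zero, add_zero] at this
    exact (isUnit_natCast_of_coprime hmn).mul_right_cancel this.symm
  have hj' : height m n A j' = height m n A j := by
    rw [← (height_periodic hA).map_mod_nat j', ← (height_periodic hA).map_mod_nat j,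
      (ZMod.natCast_eq_natCast_iff' _ _ _).mp hres]
  have hle : leastGap (m + n) (ofWord m n A) (j * n) ≤ h := by
    refine leastGap_le ((notMem_ofWord_iff hmn hA).mpr ⟨j, 0, by simp [hh]⟩) ?_
    have := cast_height (A := A) j
    rw [hh] at this
    exact_mod_cast this
  rw [hj', hh] at hg
  rw [hh]
  have : (0 : ℤ) ≤ k * (m + n) := by positivity
  omega

lemma toWord_ofWord (hmn : m.Coprime n) (hA : #A = n) (hnonneg : IsNonneg m n A) :
    toWord m n (ofWord m n A) = A := by
  ext a
  have h0 := leastGap_ofWord hmn hA hnonneg a.val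
  have h1 := leastGap_ofWord hmn hA hnonneg (a.val + 1)
  rw [Nat.cast_succ, add_mul, one_mul, height_succ, step] at h1
  rw [ZMod.natCast_zmod_val] at h0 h1
  rw [toWord, mem_filter, and_iff_right (mem_univ a)]
  split_ifs at h1 with ha
  · simp only [ha, iff_true]
    omega
  · simp only [ha, iff_false]
    have := NeZero.ne (m + n)
    omega

lemma ofWord_toWord (hmn : m.Coprime n) {H : Finset ℕ} (h0 : 0 ∉ H) (hm : IsCoreSet m H)
    (hn : IsCoreSet n H) : ofWord m n (toWord m n H) = H := by
  ext x
  have hgaps : x ∈ gapsOf m n (toWord m n H) ↔ x ∉ H := by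
    rw [notMem_iff_exists_leastGap hmn hm hn]
    simp only [gapsOf, Set.mem_ofPred_eq, height_toWord h0 hm hn]
    exact_mod_cast Iff.rfl
  rw [← not_iff_not, notMem_ofWord_iff hmn (card_toWord h0 hm hn), hgaps]

end OfWord

open Classical in
noncomputable def coreSets (m n : ℕ) : Finset (Finset ℕ) :=
  (range (m * n)).powerset.filter fun H => 0 ∉ H ∧ IsCoreSet m H ∧ IsCoreSet n H

section Counting

variable {m n : ℕ}

lemma mem_coreSets (hmn : m.Coprime n) {H : Finset ℕ} :
    H ∈ coreSets m n ↔ 0 ∉ H ∧ IsCoreSet m H ∧ IsCoreSet n H := by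
  classical
  rw [coreSets, mem_filter, mem_powerset, and_iff_right_iff_imp]
  exact fun ⟨h0, hm, hn⟩ x hx => mem_range.mpr (lt_mul_of_mem hmn h0 hm hn hx)

lemma card_coreSets [NeZero (m + n)] (hmn : m.Coprime n) :
    #(coreSets m n) = #(nonnegWords m n) := by
  refine card_nbij' (toWord m n) (ofWord m n) (fun H hH => ?_) (fun A hA => ?_)
    (fun H hH => ?_) (fun A hA => ?_)
  · obtain ⟨h0, hm, hn⟩ := (mem_coreSets hmn).mp hH
    exact mem_nonnegWords.mpr ⟨card_toWord h0 hm hn, isNonneg_toWord h0 hm hn⟩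
  · obtain ⟨hcard, -⟩ := mem_nonnegWords.mp hA
    exact (mem_coreSets hmn).mpr ⟨zero_notMem_ofWord hmn hcard,
      isCoreSet_left_ofWord hmn hcard, isCoreSet_right_ofWord hmn hcard⟩
  · obtain ⟨h0, hm, hn⟩ := (mem_coreSets hmn).mp hH
    exact ofWord_toWord hmn h0 hm hn
  · obtain ⟨hcard, hnonneg⟩ := mem_nonnegWords.mp hA
    exact toWord_ofWord hmn hcard hnonneg

lemma setOf_isCore_eq (hmn : m.Coprime n) :
    {D : Finset (ℕ × ℕ) | IsYoung D ∧ IsCore m D ∧ IsCore n D} =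
      (coreSets m n).image ofBetaSet := by
  ext D
  simp only [Set.mem_ofPred_eq, coe_image, Set.mem_image, mem_coe, mem_coreSets hmn]
  constructor
  · rintro ⟨hD, hm, hn⟩
    exact ⟨betaSet D, ⟨zero_notMem_betaSet hD, (isCore_iff_isCoreSet hD).mp hm,
      (isCore_iff_isCoreSet hD).mp hn⟩, ofBetaSet_betaSet hD⟩
  · rintro ⟨H, ⟨h0, hm, hn⟩, rfl⟩
    simp only [isCore_iff_isCoreSet isYoung_ofBetaSet, betaSet_ofBetaSet h0]
    exact ⟨isYoung_ofBetaSet, hm, hn⟩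

lemma injOn_ofBetaSet : Set.InjOn ofBetaSet {H | 0 ∉ H} := fun H h0 H' h0' h => by
  rw [← betaSet_ofBetaSet h0, h, betaSet_ofBetaSet h0']

end Counting

end Anderson

open Anderson in
theorem card_mn_cores_general (m n : ℕ) (hmn : Nat.Coprime m n) :
    {D : Finset (ℕ × ℕ) | IsYoung D ∧ IsCore m D ∧ IsCore n D}.Finite ∧
      Nat.card {D : Finset (ℕ × ℕ) | IsYoung D ∧ IsCore m D ∧ IsCore n D} =
        (m + n).choose n / (m + n) := by
  have : NeZero (m + n) := ⟨fun h => by simp_all⟩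
  have hinj : Set.InjOn ofBetaSet (coreSets m n) :=
    injOn_ofBetaSet.mono fun H hH => ((mem_coreSets hmn).mp hH).1
  rw [setOf_isCore_eq hmn, Nat.card_coe_set_eq, Set.ncard_coe_finset,
    Finset.card_image_of_injOn hinj, card_coreSets hmn, ← card_nonnegWords_mul hmn,
    Nat.mul_div_cancel _ (NeZero.pos _)]
  exact ⟨Finset.finite_toSet _, rfl⟩

/-- **Anderson's theorem.** For coprime positive `m, n`, the set of Young diagrams that
are simultaneously `m`-cores and `n`-cores is finite of cardinality
`(m+n choose n)/(m+n)`. -/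
theorem card_mn_cores (m n : ℕ) (hm : 0 < m) (hn : 0 < n) (hmn : Nat.Coprime m n) :
    {D : Finset (ℕ × ℕ) | IsYoung D ∧ IsCore m D ∧ IsCore n D}.Finite ∧
      Nat.card {D : Finset (ℕ × ℕ) | IsYoung D ∧ IsCore m D ∧ IsCore n D} =
        (m + n).choose n / (m + n) :=
  card_mn_cores_general m n hmn
end

section
/- Let m and n be coprime positive integers. Then the set of 0-normalized Γ_{m,n}-semimodules is finite and has cardinality (m+n−1)!/(m!·n!) = binom(m+n, n)/(m+n). -/
open Finset Pointwise

section ClosedUnderTranslation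

variable {Δ : Set ℤ}

lemma add_mul_mem_of_forall_add_mem {a : ℤ} (hΔ : ∀ x ∈ Δ, x + a ∈ Δ) {x : ℤ}
    (hx : x ∈ Δ) : ∀ k : ℕ, x + a * k ∈ Δ
  | 0 => by simpa using hx
  | k + 1 => by
    have := hΔ _ (add_mul_mem_of_forall_add_mem hΔ hx k)
    rwa [Nat.cast_succ, mul_add_one, ← add_assoc]

lemma le_of_intCast_eq_of_sub_notMem {N : ℕ} (hΔ : ∀ x ∈ Δ, x + N ∈ Δ) {x y : ℤ}
    (hx : x - N ∉ Δ) (hy : y ∈ Δ) (hxy : (y : ZMod N) = x) : x ≤ y := by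
  obtain ⟨k, hk⟩ := (ZMod.intCast_eq_intCast_iff_dvd_sub y x N).mp hxy
  by_contra! hlt
  have hk1 : 1 ≤ k := by nlinarith
  apply hx
  have := add_mul_mem_of_forall_add_mem hΔ hy (k - 1).toNat
  rw [Int.toNat_of_nonneg (by omega)] at this
  convert this using 1
  linarith

end ClosedUnderTranslation

lemma ZMod.natCast_right_eq_neg (m n : ℕ) : (n : ZMod (m + n)) = -m :=
  eq_neg_iff_add_eq_zero.mpr (by rw [← Nat.cast_add, add_comm, ZMod.natCast_self])

lemma ZMod.sum_range_natCast {N : ℕ} [NeZero N] {M : Type*} [AddCommMonoid M] (f : ZMod N → M) :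
    ∑ i ∈ range N, f i = ∑ x, f x :=
  sum_nbij' (↑) ZMod.val (by simp) (by simp [ZMod.val_lt])
    (fun a ha => by simp [ZMod.val_natCast, Nat.mod_eq_of_lt (mem_range.mp ha)]) (by simp) (by simp)

lemma ZMod.isUnit_natCast_left {m n : ℕ} (hmn : m.Coprime n) : IsUnit (m : ZMod (m + n)) :=
  (ZMod.isUnit_iff_coprime m (m + n)).mpr (Nat.coprime_self_add_right.mpr hmn)

section Walk

variable {m n : ℕ}

/-- A subset `s` of `ZMod (m + n)` encodes the periodic word with letter `+n` at the positions in
`s` and `-m` elsewhere; `wordWalk m n s j` is the sum of its first `j` letters. -/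
def wordWalk (m n : ℕ) (s : Finset (ZMod (m + n))) (j : ℕ) : ℤ :=
  ∑ i ∈ range j, if (i : ZMod (m + n)) ∈ s then (n : ℤ) else -m

def IsDyckWord (m n : ℕ) (s : Finset (ZMod (m + n))) : Prop :=
  #s = m ∧ ∀ j, 0 ≤ wordWalk m n s j

variable (s : Finset (ZMod (m + n)))

@[simp] lemma wordWalk_zero : wordWalk m n s 0 = 0 := sum_range_zero _

lemma wordWalk_succ (j : ℕ) :
    wordWalk m n s (j + 1) =
      wordWalk m n s j + if (j : ZMod (m + n)) ∈ s then (n : ℤ) else -m :=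
  sum_range_succ _ _

lemma wordWalk_add (i j : ℕ) :
    wordWalk m n s (i + j) = wordWalk m n s i + wordWalk m n (-(i : ZMod (m + n)) +ᵥ s) j := by
  simp only [wordWalk, sum_range_add, Nat.cast_add, mem_neg_vadd_finset_iff, vadd_eq_add]

lemma intCast_wordWalk (j : ℕ) : (wordWalk m n s j : ZMod (m + n)) = -(m * j) := by
  induction j with
  | zero => simp
  | succ j ih =>
    rw [wordWalk_succ]
    split_ifs <;> push_cast [ih, ZMod.natCast_right_eq_neg] <;> ring

lemma natCast_eq_of_intCast_wordWalk_eq (hmn : m.Coprime n) {i j : ℕ}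
    (h : (wordWalk m n s i : ZMod (m + n)) = wordWalk m n s j) : (i : ZMod (m + n)) = j := by
  rw [intCast_wordWalk, intCast_wordWalk, neg_inj] at h
  exact (ZMod.isUnit_natCast_left hmn).mul_left_cancel h

variable [NeZero (m + n)]

lemma wordWalk_self : wordWalk m n s (m + n) = (m + n) * (#s - m) := by
  have hsplit : ∀ x : ZMod (m + n),
      (if x ∈ s then (n : ℤ) else -m) = (if x ∈ s then ((m : ℤ) + n) else 0) - m := by
    intro x; split_ifs <;> ring
  rw [wordWalk, ZMod.sum_range_natCast (fun x => if x ∈ s then (n : ℤ) else -m),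
    sum_congr rfl fun x _ => hsplit x, sum_sub_distrib, sum_ite_mem, univ_inter,
    sum_const, sum_const, card_univ, ZMod.card]
  simp only [nsmul_eq_mul]
  push_cast
  ring

variable {s}

lemma wordWalk_periodic (hs : #s = m) : Function.Periodic (wordWalk m n s) (m + n) := fun j => by
  rw [wordWalk_add, wordWalk_self, card_vadd_finset, hs]
  simp

lemma wordWalk_eq_of_natCast_eq (hs : #s = m) {i j : ℕ} (h : (i : ZMod (m + n)) = j) :
    wordWalk m n s i = wordWalk m n s j := by
  rw [← (wordWalk_periodic hs).map_mod_nat i, ← (wordWalk_periodic hs).map_mod_nat j,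
    (ZMod.natCast_eq_natCast_iff' i j (m + n)).mp h]

lemma isDyckWord_neg_vadd_iff (hs : #s = m) (t : ℕ) :
    IsDyckWord m n (-(t : ZMod (m + n)) +ᵥ s) ↔
      ∀ k, wordWalk m n s t ≤ wordWalk m n s k := by
  simp only [IsDyckWord, card_vadd_finset, hs, true_and]
  refine ⟨fun h k => ?_, fun h j => ?_⟩
  · obtain ⟨j, hj⟩ := Nat.exists_eq_add_of_le
      (le_add_left (Nat.le_mul_of_pos_right t (NeZero.pos (m + n))) : t ≤ k + t * (m + n))
    have hper : wordWalk m n s (k + t * (m + n)) = wordWalk m n s k := by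
      simpa using (wordWalk_periodic hs).nat_mul t k
    rw [hj] at hper
    linarith [wordWalk_add s t j, h j]
  · linarith [wordWalk_add s t j, h (t + j)]

lemma existsUnique_isDyckWord_vadd (hmn : m.Coprime n) (hs : #s = m) :
    ∃! r : ZMod (m + n), IsDyckWord m n (r +ᵥ s) := by
  obtain ⟨t, -, ht⟩ := (range (m + n)).exists_min_image (wordWalk m n s)
    (nonempty_range_iff.mpr (NeZero.ne _))
  have hmin : ∀ k, wordWalk m n s t ≤ wordWalk m n s k := fun k => by
    rw [← (wordWalk_periodic hs).map_mod_nat k]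
    exact ht _ (mem_range.mpr (Nat.mod_lt _ (NeZero.pos _)))
  refine ⟨-(t : ZMod (m + n)), (isDyckWord_neg_vadd_iff hs t).mpr hmin, fun r hr => ?_⟩
  obtain ⟨u, rfl⟩ : ∃ u : ℕ, r = -(u : ZMod (m + n)) := ⟨(-r).val, by simp⟩
  have hmin' := (isDyckWord_neg_vadd_iff hs u).mp hr
  rw [natCast_eq_of_intCast_wordWalk_eq s hmn (congrArg _ (le_antisymm (hmin' t) (hmin u)))]

lemma card_isDyckWord_mul (hmn : m.Coprime n) :
    Nat.card {s // IsDyckWord m n s} * (m + n) = (m + n).choose m := by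
  let f : {s // IsDyckWord m n s} × ZMod (m + n) → {s : Finset (ZMod (m + n)) // #s = m} :=
    fun p => ⟨p.2 +ᵥ p.1.1, by rw [card_vadd_finset, p.1.2.1]⟩
  have hf : Function.Bijective f := by
    refine ⟨fun ⟨⟨g, hg⟩, r⟩ ⟨⟨g', hg'⟩, r'⟩ h => ?_, fun ⟨s, hs⟩ => ?_⟩
    · simp only [f, Subtype.mk.injEq] at h
      have hr : -r = -r' :=
        (existsUnique_isDyckWord_vadd (s := r +ᵥ g) hmn (by rw [card_vadd_finset, hg.1])).unique
          (by rwa [neg_vadd_vadd]) (by rw [h, neg_vadd_vadd]; exact hg')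
      obtain rfl := neg_inj.mp hr
      obtain rfl := vadd_left_cancel r h
      rfl
    · obtain ⟨r, hr, -⟩ := existsUnique_isDyckWord_vadd hmn hs
      exact ⟨(⟨r +ᵥ s, hr⟩, -r), Subtype.ext (neg_vadd_vadd r s)⟩
  have := Nat.card_congr (Equiv.ofBijective f hf)
  rwa [Nat.card_prod, Nat.card_zmod, Nat.card_eq_fintype_card (α := {s : Finset _ // #s = m}),
    Fintype.card_finset_len, ZMod.card] at this

end Walk

section Greedy

variable {m n : ℕ} {Δ : Set ℤ}

lemma IsSemimodule.add_mem_s8 (h : IsSemimodule m n Δ) {x : ℤ} (hx : x ∈ Δ) :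
    x + (m + n : ℕ) ∈ Δ := by
  rw [Nat.cast_add, ← add_assoc]
  exact h.2.2.2 _ (h.2.2.1 _ hx)

open Classical in
noncomputable def greedyStep (m n : ℕ) (Δ : Set ℤ) (x : ℤ) : ℤ :=
  if x - m ∈ Δ then x - m else x + n

noncomputable def greedyWalk (m n : ℕ) (Δ : Set ℤ) (j : ℕ) : ℤ :=
  (greedyStep m n Δ)^[j] 0

@[simp] lemma greedyWalk_zero : greedyWalk m n Δ 0 = 0 := rfl

lemma greedyWalk_succ (j : ℕ) :
    greedyWalk m n Δ (j + 1) = greedyStep m n Δ (greedyWalk m n Δ j) :=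
  Function.iterate_succ_apply' _ _ _

lemma intCast_greedyWalk (j : ℕ) : (greedyWalk m n Δ j : ZMod (m + n)) = -(m * j) := by
  induction j with
  | zero => simp
  | succ j ih =>
    rw [greedyWalk_succ, greedyStep]
    split_ifs <;> push_cast [ih, ZMod.natCast_right_eq_neg] <;> ring

variable [NeZero (m + n)]

lemma IsSemimodule.greedyWalk_mem (h : IsSemimodule m n Δ) (j : ℕ) :
    greedyWalk m n Δ j ∈ Δ ∧ greedyWalk m n Δ j - (m + n : ℕ) ∉ Δ := by
  induction j with
  | zero =>
    refine ⟨h.2.1, fun hneg => ?_⟩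
    have hnonneg := h.1 _ hneg
    rw [greedyWalk_zero] at hnonneg
    have := NeZero.pos (m + n)
    omega
  | succ j ih =>
    obtain ⟨hmem, hmin⟩ := ih
    rw [greedyWalk_succ, greedyStep]
    split_ifs with hsub
    · refine ⟨hsub, fun h' => hmin ?_⟩
      convert h.2.2.1 _ h' using 1
      push_cast; ring
    · refine ⟨h.2.2.2 _ hmem, ?_⟩
      convert hsub using 2
      push_cast; ring

lemma IsSemimodule.greedyWalk_periodic (h : IsSemimodule m n Δ) :
    Function.Periodic (greedyWalk m n Δ) (m + n) := by
  have hperiod : greedyWalk m n Δ (m + n) = 0 := by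
    have hcast : (greedyWalk m n Δ (m + n) : ZMod (m + n)) = ((0 : ℤ) : ZMod (m + n)) := by
      rw [intCast_greedyWalk]; simp
    obtain ⟨hmem, hmin⟩ := h.greedyWalk_mem (m + n)
    obtain ⟨hmem₀, hmin₀⟩ := h.greedyWalk_mem 0
    rw [greedyWalk_zero] at hmem₀ hmin₀
    exact le_antisymm (le_of_intCast_eq_of_sub_notMem (fun _ => h.add_mem_s8) hmin hmem₀ hcast.symm)
      (le_of_intCast_eq_of_sub_notMem (fun _ => h.add_mem_s8) hmin₀ hmem hcast)
  intro j
  rw [greedyWalk, Function.iterate_add_apply]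
  exact congrArg _ hperiod

open Classical in
noncomputable def wordOf (m n : ℕ) [NeZero (m + n)] (Δ : Set ℤ) : Finset (ZMod (m + n)) :=
  {x | greedyWalk m n Δ x.val - m ∉ Δ}

lemma IsSemimodule.natCast_mem_wordOf (h : IsSemimodule m n Δ) (j : ℕ) :
    (j : ZMod (m + n)) ∈ wordOf m n Δ ↔ greedyWalk m n Δ j - m ∉ Δ := by
  simp only [wordOf, mem_filter, mem_univ, true_and, ZMod.val_natCast,
    h.greedyWalk_periodic.map_mod_nat]

lemma IsSemimodule.wordWalk_wordOf (h : IsSemimodule m n Δ) :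
    wordWalk m n (wordOf m n Δ) = greedyWalk m n Δ := by
  funext j
  induction j with
  | zero => simp
  | succ j ih =>
    rw [wordWalk_succ, greedyWalk_succ, greedyStep, ih]
    have := h.natCast_mem_wordOf j
    by_cases hj : greedyWalk m n Δ j - m ∈ Δ
    · rw [if_pos hj, if_neg (fun h' => (this.mp h') hj)]
      ring
    · rw [if_neg hj, if_pos (this.mpr hj)]

lemma IsSemimodule.isDyckWord_wordOf (h : IsSemimodule m n Δ) :
    IsDyckWord m n (wordOf m n Δ) := by
  refine ⟨?_, fun j => h.wordWalk_wordOf ▸ h.1 _ (h.greedyWalk_mem j).1⟩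
  have hself := wordWalk_self (wordOf m n Δ)
  rw [h.wordWalk_wordOf, h.greedyWalk_periodic.eq, greedyWalk_zero, eq_comm, mul_eq_zero] at hself
  have := NeZero.pos (m + n)
  omega

end Greedy

section WordToSemimodule

def semimoduleOfWord (m n : ℕ) (s : Finset (ZMod (m + n))) : Set ℤ :=
  {y | ∃ j k : ℕ, y = wordWalk m n s j + (m + n : ℕ) * k}

variable {m n : ℕ} [NeZero (m + n)] {s : Finset (ZMod (m + n))}

lemma isSemimodule_semimoduleOfWord (hs : IsDyckWord m n s) :
    IsSemimodule m n (semimoduleOfWord m n s) := by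
  refine ⟨?_, ⟨0, 0, by simp⟩, ?_, ?_⟩
  · rintro _ ⟨j, k, rfl⟩
    exact add_nonneg (hs.2 j) (by positivity)
  · rintro _ ⟨j, k, rfl⟩
    obtain ⟨i, hi⟩ : ∃ i, j + (m + n) = i + 1 :=
      ⟨j + (m + n) - 1, by have := NeZero.pos (m + n); omega⟩
    have hstep := wordWalk_succ s i
    rw [← hi, (wordWalk_periodic hs.1) j] at hstep
    split_ifs at hstep
    · exact ⟨i, k + 1, by push_cast at hstep ⊢; linarith⟩
    · exact ⟨i, k, by push_cast at hstep ⊢; linarith⟩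
  · rintro _ ⟨j, k, rfl⟩
    have hstep := wordWalk_succ s j
    split_ifs at hstep
    · exact ⟨j + 1, k, by linarith⟩
    · exact ⟨j + 1, k + 1, by push_cast at hstep ⊢; linarith⟩

lemma wordWalk_sub_mem_semimoduleOfWord_iff (hmn : m.Coprime n) (hs : IsDyckWord m n s) (j : ℕ) :
    wordWalk m n s j - m ∈ semimoduleOfWord m n s ↔ (j : ZMod (m + n)) ∉ s := by
  refine ⟨fun ⟨i, k, hik⟩ hj => ?_,
    fun hj => ⟨j + 1, 0, by rw [wordWalk_succ, if_neg hj]; push_cast; ring⟩⟩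
  -- every point of the set congruent to `wordWalk m n s (j + 1) = wordWalk m n s j + n`
  -- mod `m + n` is at least that value
  have hcast : (wordWalk m n s i : ZMod (m + n)) = wordWalk m n s (j + 1) := by
    rw [eq_sub_of_add_eq hik.symm, wordWalk_succ, if_pos hj]
    push_cast [ZMod.natCast_self, ZMod.natCast_right_eq_neg]
    ring
  have hij := wordWalk_eq_of_natCast_eq hs.1 (natCast_eq_of_intCast_wordWalk_eq s hmn hcast)
  rw [wordWalk_succ, if_pos hj] at hij
  have := NeZero.pos (m + n)
  nlinarith

lemma greedyWalk_semimoduleOfWord (hmn : m.Coprime n) (hs : IsDyckWord m n s) :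
    greedyWalk m n (semimoduleOfWord m n s) = wordWalk m n s := by
  funext j
  induction j with
  | zero => simp
  | succ j ih =>
    rw [greedyWalk_succ, ih, wordWalk_succ, greedyStep]
    have := wordWalk_sub_mem_semimoduleOfWord_iff hmn hs j
    by_cases hj : (j : ZMod (m + n)) ∈ s
    · rw [if_pos hj, if_neg (fun h' => this.mp h' hj)]
    · rw [if_neg hj, if_pos (this.mpr hj)]
      ring

lemma wordOf_semimoduleOfWord (hmn : m.Coprime n) (hs : IsDyckWord m n s) :
    wordOf m n (semimoduleOfWord m n s) = s := by
  ext x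
  rw [← ZMod.natCast_zmod_val x, (isSemimodule_semimoduleOfWord hs).natCast_mem_wordOf,
    greedyWalk_semimoduleOfWord hmn hs, wordWalk_sub_mem_semimoduleOfWord_iff hmn hs, not_not]

end WordToSemimodule

lemma IsSemimodule.semimoduleOfWord_wordOf {m n : ℕ} [NeZero (m + n)] {Δ : Set ℤ}
    (h : IsSemimodule m n Δ) (hmn : m.Coprime n) : semimoduleOfWord m n (wordOf m n Δ) = Δ := by
  ext y
  simp only [semimoduleOfWord, h.wordWalk_wordOf, Set.mem_ofPred_eq]
  refine ⟨fun ⟨j, k, hy⟩ => hy ▸ add_mul_mem_of_forall_add_mem (fun _ => h.add_mem_s8)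
    (h.greedyWalk_mem j).1 k, fun hy => ?_⟩
  obtain ⟨c, hc⟩ := (ZMod.isUnit_natCast_left hmn).exists_right_inv
  set j := (-(y : ZMod (m + n)) * c).val
  have hj : (greedyWalk m n Δ j : ZMod (m + n)) = y := by
    rw [intCast_greedyWalk, ZMod.natCast_zmod_val, ← mul_assoc, mul_comm _ (-(y : ZMod (m + n))),
      mul_assoc, hc, mul_one, neg_neg]
  have hle := le_of_intCast_eq_of_sub_notMem (fun _ => h.add_mem_s8) (h.greedyWalk_mem j).2 hy hj.symm
  obtain ⟨k, hk⟩ := (ZMod.intCast_eq_intCast_iff_dvd_sub _ _ _).mp hj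
  have hk0 : 0 ≤ k := by
    have : (0 : ℤ) < (m + n : ℕ) := mod_cast NeZero.pos (m + n)
    nlinarith
  exact ⟨j, k.toNat, by rw [Int.toNat_of_nonneg hk0]; linarith⟩

noncomputable def semimoduleEquivDyckWord {m n : ℕ} [NeZero (m + n)] (hmn : m.Coprime n) :
    {Δ : Set ℤ // IsSemimodule m n Δ} ≃ {s // IsDyckWord m n s} where
  toFun Δ := ⟨wordOf m n Δ, Δ.2.isDyckWord_wordOf⟩
  invFun s := ⟨semimoduleOfWord m n s, isSemimodule_semimoduleOfWord s.2⟩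
  left_inv Δ := Subtype.ext (Δ.2.semimoduleOfWord_wordOf hmn)
  right_inv s := Subtype.ext (wordOf_semimoduleOfWord hmn s.2)

lemma Nat.eq_factorial_div_of_mul_eq_choose {m n c : ℕ} (hN : 0 < m + n)
    (h : c * (m + n) = (m + n).choose m) :
    c = (m + n - 1).factorial / (m.factorial * n.factorial) := by
  refine (Nat.div_eq_of_eq_mul_left (by positivity) ?_).symm
  have hfact := Nat.choose_mul_factorial_mul_factorial (Nat.le_add_right m n)
  rw [Nat.add_sub_cancel_left, ← h, ← Nat.mul_factorial_pred hN.ne'] at hfact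
  exact Nat.eq_of_mul_eq_mul_left hN (by rw [← hfact]; ring)

theorem card_semimodules_general (m n : ℕ) (hmn : Nat.Coprime m n) :
    {Δ : Set ℤ | IsSemimodule m n Δ}.Finite ∧
      Nat.card {Δ : Set ℤ | IsSemimodule m n Δ} =
        (m + n - 1).factorial / (m.factorial * n.factorial) ∧
      Nat.card {Δ : Set ℤ | IsSemimodule m n Δ} = (m + n).choose n / (m + n) := by
  have hN : 0 < m + n := Nat.pos_of_ne_zero fun h => by
    obtain ⟨rfl, rfl⟩ := Nat.add_eq_zero_iff.mp h
    exact absurd hmn (by decide)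
  have : NeZero (m + n) := ⟨hN.ne'⟩
  have hcard : Nat.card {Δ : Set ℤ | IsSemimodule m n Δ} * (m + n) = (m + n).choose m :=
    (Nat.card_congr (semimoduleEquivDyckWord hmn)).symm ▸ card_isDyckWord_mul hmn
  refine ⟨Set.finite_coe_iff.mp (Finite.of_equiv _ (semimoduleEquivDyckWord hmn).symm),
    Nat.eq_factorial_div_of_mul_eq_choose hN hcard, ?_⟩
  rw [← Nat.choose_symm_add, ← hcard, Nat.mul_div_cancel _ hN]

/-- **Counting semimodules.** For coprime positive `m, n`, there are finitely many
0-normalized `Γ_{m,n}`-semimodules, and their number is the rational Catalan number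
`(m+n-1)!/(m!·n!) = (m+n choose n)/(m+n)`. -/
theorem card_semimodules (m n : ℕ) (hm : 0 < m) (hn : 0 < n) (hmn : Nat.Coprime m n) :
    {Δ : Set ℤ | IsSemimodule m n Δ}.Finite ∧
      Nat.card {Δ : Set ℤ | IsSemimodule m n Δ} =
        (m + n - 1).factorial / (m.factorial * n.factorial) ∧
      Nat.card {Δ : Set ℤ | IsSemimodule m n Δ} = (m + n).choose n / (m + n) :=
  card_semimodules_general m n hmn
end

section
/- Let n and k be positive integers with kn ≥ 2, m = kn − 1, and let Δ be a 0-normalized Γ_{m,n}-semimodule. If x ∈ Δ and x − αn + 1 ∉ Δ for some α ∈ {0, 1, …, k}, then x − (kn−1) ∉ Δ, i.e. x is a (kn−1)-generator of Δ. -/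
lemma IsSemimodule.add_mul_right_mem {m n : ℕ} {Δ : Set ℤ} (hΔ : IsSemimodule m n Δ)
    {y : ℤ} (hy : y ∈ Δ) (j : ℕ) : y + j * n ∈ Δ := by
  have := Set.MapsTo.iterate (f := (· + (n : ℤ))) hΔ.2.2.2 j hy
  rwa [add_right_iterate, nsmul_eq_mul] at this

theorem generator_of_gap_knm1_general (n k : ℕ)
    (Δ : Set ℤ) (hΔ : IsSemimodule (k * n - 1) n Δ)
    (x : ℤ) (α : ℕ) (hα : α ≤ k) (hgap : x - α * n + 1 ∉ Δ) :
    x - ((k * n : ℤ) - 1) ∉ Δ := by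
  intro h
  have shift : x - ((k * n : ℤ) - 1) + ((k - α : ℕ) : ℤ) * n = x - α * n + 1 := by
    push_cast [hα]
    ring
  exact hgap (shift ▸ hΔ.add_mul_right_mem h (k - α))

/-- For `m = kn-1`: if `x ∈ Δ` and `x - αn + 1 ∉ Δ` for some `0 ≤ α ≤ k`, then `x` is a
`(kn-1)`-generator of `Δ`. -/
theorem generator_of_gap_knm1 (n k : ℕ) (hn : 0 < n) (hk : 0 < k) (hkn : 2 ≤ k * n)
    (Δ : Set ℤ) (hΔ : IsSemimodule (k * n - 1) n Δ)
    (x : ℤ) (hx : x ∈ Δ) (α : ℕ) (hα : α ≤ k) (hgap : x - α * n + 1 ∉ Δ) :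
    x - ((k * n : ℤ) - 1) ∉ Δ :=
  generator_of_gap_knm1_general n k Δ hΔ x α hα hgap
end

section
/- Let n and k be positive integers with kn ≥ 2, m = kn − 1, and let Δ be a 0-normalized Γ_{m,n}-semimodule. If a is a (kn−1)-generator of Δ (a ∈ Δ, a − (kn−1) ∉ Δ), then for every integer l ≥ 1 the interval [a − lkn + 1, a − l(kn−1)] has empty intersection with Δ. -/
/-!
Write `m = kn - 1` and let `y = a - lkn + j` with `1 ≤ j ≤ l` lie in `Δ`. Then
`a - m = y + (j - 1) m + k (l - j) n`, so `a - m ∈ Δ` and `a` is not an `m`-generator.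
-/

theorem add_nat_mul_mem_of_forall_add_mem {Δ : Set ℤ} {d : ℤ} (hd : ∀ x ∈ Δ, x + d ∈ Δ)
    {x : ℤ} (hx : x ∈ Δ) (u : ℕ) : x + u * d ∈ Δ := by
  induction u with
  | zero => simpa using hx
  | succ u ih =>
    rw [Nat.cast_succ, add_one_mul, ← add_assoc]
    exact hd _ ih

namespace IsSemimodule

variable {m n : ℕ} {Δ : Set ℤ}

theorem add_mul_add_mul_mem (hΔ : IsSemimodule m n Δ) {x : ℤ} (hx : x ∈ Δ) (u v : ℕ) :
    x + u * m + v * n ∈ Δ :=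
  add_nat_mul_mem_of_forall_add_mem hΔ.2.2.2
    (add_nat_mul_mem_of_forall_add_mem hΔ.2.2.1 hx u) v

theorem sub_mem_of_mem_Icc {k : ℕ} (hΔ : IsSemimodule m n Δ) (hmk : (m : ℤ) + 1 = k * n)
    {a y : ℤ} {l : ℕ} (hy : y ∈ Δ) (hyI : y ∈ Set.Icc (a - l * (m + 1) + 1) (a - l * m)) :
    a - m ∈ Δ := by
  obtain ⟨hy₁, hy₂⟩ := hyI
  obtain ⟨u, hu⟩ : ∃ u : ℕ, (u : ℤ) = y - a + l * (m + 1) - 1 :=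
    ⟨_, Int.toNat_of_nonneg (by linarith)⟩
  obtain ⟨w, hw⟩ : ∃ w : ℕ, (w : ℤ) = l - (y - a + l * (m + 1)) :=
    ⟨_, Int.toNat_of_nonneg (by linarith)⟩
  have hsum : a - m = y + u * m + (k * w : ℕ) * n := by
    rw [Nat.cast_mul, mul_assoc, mul_comm (w : ℤ), ← mul_assoc, ← hmk, hu, hw]
    ring
  exact hsum ▸ hΔ.add_mul_add_mul_mem hy u (k * w)

end IsSemimodule

theorem gaps_knm1_general (n k : ℕ) (hkn : 2 ≤ k * n)
    (Δ : Set ℤ) (hΔ : IsSemimodule (k * n - 1) n Δ)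
    (a : ℤ) (ha' : a - ((k * n : ℤ) - 1) ∉ Δ)
    (l : ℕ) (y : ℤ)
    (hy₁ : a - l * (k * n) + 1 ≤ y) (hy₂ : y ≤ a - l * ((k * n : ℤ) - 1)) :
    y ∉ Δ := by
  have hm : ((k * n - 1 : ℕ) : ℤ) = k * n - 1 := by
    rw [Nat.cast_sub (by omega), Nat.cast_mul, Nat.cast_one]
  intro hy
  have hyI : y ∈ Set.Icc (a - l * ((k * n - 1 : ℕ) + 1) + 1) (a - l * (k * n - 1 : ℕ)) := by
    rw [hm, sub_add_cancel]
    exact ⟨hy₁, hy₂⟩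
  exact ha' (hm ▸ hΔ.sub_mem_of_mem_Icc (k := k) (by rw [hm]; ring) hy hyI)

/-- For `m = kn-1`: if `a` is a `(kn-1)`-generator of `Δ`, then for every `l ≥ 1` the
interval `[a - lkn + 1, a - l(kn-1)]` is disjoint from `Δ`. -/
theorem gaps_knm1 (n k : ℕ) (hn : 0 < n) (hk : 0 < k) (hkn : 2 ≤ k * n)
    (Δ : Set ℤ) (hΔ : IsSemimodule (k * n - 1) n Δ)
    (a : ℤ) (ha : a ∈ Δ) (ha' : a - ((k * n : ℤ) - 1) ∉ Δ)
    (l : ℕ) (hl : 1 ≤ l) (y : ℤ)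
    (hy₁ : a - l * (k * n) + 1 ≤ y) (hy₂ : y ≤ a - l * ((k * n : ℤ) - 1)) :
    y ∉ Δ :=
  gaps_knm1_general n k hkn Δ hΔ a ha' l y hy₁ hy₂
end
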